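/- arXiv:2603.26006 — 12 statements merged into one kernel-verified Lean document; each statement's English description precedes it below -/
import Mathlib

section
/- Let G = (V,E) be a finite simple graph with |V| ≥ 4, and let G' be the split construction of G. Then G admits a fixed point free automorphism if and only if G' admits a fixed point free automorphism. -/
/-- The split construction: vertex set `V ⊕ (E × {1,2})`; two distinct vertices are
adjacent iff both lie in `V`, or one is `u ∈ V` and the other is `(e, i)` with `u` an
endpoint of the edge `e`. -/
def splitConstruction {V : Type} (G : SimpleGraph V) :
    SimpleGraph (V ⊕ (G.edgeSet × Bool)) :=
  SimpleGraph.fromRel (fun x y =>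
    (∃ u v : V, x = Sum.inl u ∧ y = Sum.inl v) ∨
    (∃ (u : V) (e : G.edgeSet) (i : Bool),
      x = Sum.inl u ∧ y = Sum.inr (e, i) ∧ u ∈ (e : Sym2 V)))
/-- A graph has a fixed point free automorphism if some automorphism maps no vertex
to itself. -/
def HasFPFAut {W : Type} (H : SimpleGraph W) : Prop :=
  ∃ φ : H ≃g H, ∀ v, φ v ≠ v
section aux

variable {V : Type} {G : SimpleGraph V}

lemma sc_inl_inl (u v : V) :
    (splitConstruction G).Adj (.inl u) (.inl v) ↔ u ≠ v := by
  simp [splitConstruction, SimpleGraph.fromRel_adj]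

lemma sc_inl_inr (u : V) (e : G.edgeSet) (i : Bool) :
    (splitConstruction G).Adj (.inl u) (.inr (e, i)) ↔ u ∈ (e : Sym2 V) := by
  simp only [splitConstruction, SimpleGraph.fromRel_adj]
  aesop

lemma sc_inr_inr (p q : G.edgeSet × Bool) :
    ¬ (splitConstruction G).Adj (.inr p) (.inr q) := by
  simp [splitConstruction, SimpleGraph.fromRel_adj]

/-- Having at least three distinct neighbours. -/
def ThreeNbrs {W : Type} (H : SimpleGraph W) (x : W) : Prop :=
  ∃ a b c, a ≠ b ∧ a ≠ c ∧ b ≠ c ∧ H.Adj x a ∧ H.Adj x b ∧ H.Adj x c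

lemma threeNbrs_map {W : Type} {H H' : SimpleGraph W} (ψ : H ≃g H') (x : W) :
    ThreeNbrs H x → ThreeNbrs H' (ψ x) := by
  rintro ⟨a, b, c, hab, hac, hbc, ha, hb, hc⟩
  exact ⟨ψ a, ψ b, ψ c, fun h => hab (ψ.injective h), fun h => hac (ψ.injective h),
    fun h => hbc (ψ.injective h), ψ.map_adj_iff.mpr ha, ψ.map_adj_iff.mpr hb,
    ψ.map_adj_iff.mpr hc⟩

lemma inl_threeNbrs [Fintype V] (hV : 4 ≤ Fintype.card V) (u : V) :
    ThreeNbrs (splitConstruction G) (Sum.inl u) := by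
  classical
  have h3 : 3 ≤ (Finset.univ.erase u).card := by
    have := Finset.card_erase_of_mem (Finset.mem_univ u)
    rw [this, Finset.card_univ]
    omega
  obtain ⟨t, hts, htc⟩ := Finset.exists_subset_card_eq h3
  obtain ⟨a, b, c, hab, hac, hbc, rfl⟩ := Finset.card_eq_three.mp htc
  have ha : a ≠ u := Finset.ne_of_mem_erase (hts (by simp))
  have hb : b ≠ u := Finset.ne_of_mem_erase (hts (by simp))
  have hc : c ≠ u := Finset.ne_of_mem_erase (hts (by simp))
  exact ⟨.inl a, .inl b, .inl c, by simp [hab], by simp [hac], by simp [hbc],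
    (sc_inl_inl u a).mpr (Ne.symm ha), (sc_inl_inl u b).mpr (Ne.symm hb),
    (sc_inl_inl u c).mpr (Ne.symm hc)⟩

lemma inr_not_threeNbrs (p : G.edgeSet × Bool) :
    ¬ ThreeNbrs (splitConstruction G) (Sum.inr p) := by
  rintro ⟨a, b, c, hab, hac, hbc, ha, hb, hc⟩
  obtain ⟨e, i⟩ := p
  obtain ⟨⟨x, y⟩, hxy⟩ := (e : Sym2 V).exists_rep
  -- each neighbour of inr (e,i) is inl of an endpoint of e
  have key : ∀ z, (splitConstruction G).Adj (.inr (e, i)) z →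
      z = Sum.inl x ∨ z = Sum.inl y := by
    intro z hz
    cases z with
    | inl w =>
      have hw : w ∈ (e : Sym2 V) := (sc_inl_inr w e i).mp hz.symm
      rw [← hxy, Sym2.mem_iff] at hw
      rcases hw with rfl | rfl
      · exact Or.inl rfl
      · exact Or.inr rfl
    | inr q => exact absurd hz (sc_inr_inr _ _)
  rcases key a ha with rfl | rfl <;> rcases key b hb with h | h <;>
    rcases key c hc with h' | h' <;> simp_all

/-- Any isomorphism of the split construction sending `inl` to `inl` induces
a map preserving adjacency. -/
lemma induced_adj [Fintype V] (hV : 4 ≤ Fintype.card V)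
    (ψ : splitConstruction G ≃g splitConstruction G) (f : V → V)
    (hf : ∀ u, ψ (Sum.inl u) = Sum.inl (f u)) {u v : V} (huv : G.Adj u v) :
    G.Adj (f u) (f v) := by
  have hne : u ≠ v := huv.ne
  set e : G.edgeSet := ⟨s(u, v), huv⟩ with he
  -- ψ sends inr to inr
  obtain ⟨⟨e', i'⟩, hp⟩ : ∃ p : G.edgeSet × Bool, ψ (Sum.inr (e, false)) = Sum.inr p := by
    cases h : ψ (Sum.inr (e, false)) with
    | inl w =>
      exfalso
      have h1 := threeNbrs_map ψ.symm (Sum.inl w) (inl_threeNbrs hV w)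
      rw [← h, ψ.symm_apply_apply] at h1
      exact inr_not_threeNbrs _ h1
    | inr p => exact ⟨p, rfl⟩
  have hfne : f u ≠ f v := by
    intro h
    apply hne
    have h2 : (Sum.inl u : V ⊕ (G.edgeSet × Bool)) = Sum.inl v :=
      ψ.injective (by rw [hf u, hf v, h])
    exact Sum.inl.inj h2
  have hu : f u ∈ (e' : Sym2 V) := by
    have : (splitConstruction G).Adj (Sum.inl u) (Sum.inr (e, false)) :=
      (sc_inl_inr u e false).mpr (by rw [he]; exact Sym2.mem_mk_left u v)
    have h2 := ψ.map_adj_iff.mpr this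
    rw [hf u, hp] at h2
    exact (sc_inl_inr _ e' i').mp h2
  have hv : f v ∈ (e' : Sym2 V) := by
    have : (splitConstruction G).Adj (Sum.inl v) (Sum.inr (e, false)) :=
      (sc_inl_inr v e false).mpr (by rw [he]; exact Sym2.mem_mk_right u v)
    have h2 := ψ.map_adj_iff.mpr this
    rw [hf v, hp] at h2
    exact (sc_inl_inr _ e' i').mp h2
  have := (Sym2.mem_and_mem_iff hfne).mp ⟨hu, hv⟩
  have he' := e'.2
  rw [this] at he'
  exact he'

end aux

section fwd

open scoped Classical

variable {V : Type} {G : SimpleGraph V}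

/-- Flip the boolean over fixed points of `f`. -/
noncomputable def flipPerm {α : Type} (f : α → α) : Equiv.Perm (α × Bool) :=
  Function.Involutive.toPerm
    (fun p => (p.1, if f p.1 = p.1 then !p.2 else p.2))
    (by rintro ⟨e, i⟩; by_cases h : f e = e <;> simp [h])

/-- The induced permutation of edge-vertices, flipping the boolean on fixed edges. -/
noncomputable def edgePerm (φ : G ≃g G) : G.edgeSet × Bool ≃ G.edgeSet × Bool :=
  (flipPerm φ.mapEdgeSet).trans (Equiv.prodCongr φ.mapEdgeSet (Equiv.refl Bool))

lemma edgePerm_apply (φ : G ≃g G) (e : G.edgeSet) (i : Bool) :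
    edgePerm φ (e, i) = (φ.mapEdgeSet e, if φ.mapEdgeSet e = e then !i else i) := by
  simp [edgePerm, flipPerm, Function.Involutive.toPerm, Function.Involutive.coe_toPerm]

lemma mapEdgeSet_coe (φ : G ≃g G) (e : G.edgeSet) :
    (φ.mapEdgeSet e : Sym2 V) = Sym2.map φ (e : Sym2 V) := rfl

lemma mem_mapEdgeSet (φ : G ≃g G) (u : V) (e : G.edgeSet) :
    φ u ∈ (φ.mapEdgeSet e : Sym2 V) ↔ u ∈ (e : Sym2 V) := by
  rw [mapEdgeSet_coe]
  simp only [Sym2.mem_map]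
  constructor
  · rintro ⟨a, ha, h⟩
    rwa [← φ.injective h]
  · exact fun h => ⟨u, h, rfl⟩

noncomputable def splitIso (φ : G ≃g G) : splitConstruction G ≃g splitConstruction G where
  toEquiv := Equiv.sumCongr φ.toEquiv (edgePerm φ)
  map_rel_iff' := by
    rintro (u | ⟨e, i⟩) (v | ⟨e', i'⟩)
    · show (splitConstruction G).Adj (.inl (φ u)) (.inl (φ v)) ↔ _
      rw [sc_inl_inl, sc_inl_inl]
      exact φ.injective.ne_iff
    · show (splitConstruction G).Adj (.inl (φ u)) (.inr (edgePerm φ (e', i'))) ↔ _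
      rw [edgePerm_apply, sc_inl_inr, sc_inl_inr, mem_mapEdgeSet]
    · show (splitConstruction G).Adj (.inr (edgePerm φ (e, i))) (.inl (φ v)) ↔ _
      rw [(splitConstruction G).adj_comm, (splitConstruction G).adj_comm _ (Sum.inl v)]
      rw [edgePerm_apply, sc_inl_inr, sc_inl_inr, mem_mapEdgeSet]
    · constructor
      · intro h
        exact absurd h (sc_inr_inr _ _)
      · intro h
        exact absurd h (sc_inr_inr _ _)

end fwd

/-- for a finite simple graph `G` with at least 4 vertices, `G` admits a
fixed point free automorphism iff its split construction does. -/
theorem split_fpfAut_iff {V : Type} [Fintype V] (G : SimpleGraph V)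
    (hV : 4 ≤ Fintype.card V) :
    HasFPFAut G ↔ HasFPFAut (splitConstruction G) := by
  constructor
  · rintro ⟨φ, hφ⟩
    refine ⟨splitIso φ, ?_⟩
    rintro (u | ⟨e, i⟩)
    · exact fun h => hφ u (Sum.inl.inj h)
    · intro h
      have h2 : edgePerm φ (e, i) = (e, i) := Sum.inr.inj h
      rw [edgePerm_apply, Prod.mk.injEq] at h2
      obtain ⟨he, hi⟩ := h2
      rw [if_pos he] at hi
      exact Bool.not_ne_self i hi
  · rintro ⟨ψ, hψ⟩
    have h1 : ∀ u : V, ∃ w, ψ (Sum.inl u) = Sum.inl w := by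
      intro u
      cases h : ψ (Sum.inl u) with
      | inl w => exact ⟨w, rfl⟩
      | inr p =>
        exfalso
        have := threeNbrs_map ψ (Sum.inl u) (inl_threeNbrs hV u)
        rw [h] at this
        exact inr_not_threeNbrs p this
    have h2 : ∀ u : V, ∃ w, ψ.symm (Sum.inl u) = Sum.inl w := by
      intro u
      cases h : ψ.symm (Sum.inl u) with
      | inl w => exact ⟨w, rfl⟩
      | inr p =>
        exfalso
        have := threeNbrs_map ψ.symm (Sum.inl u) (inl_threeNbrs hV u)
        rw [h] at this
        exact inr_not_threeNbrs p this
    choose f hf using h1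
    choose g hg using h2
    have hgf : ∀ u, g (f u) = u := by
      intro u
      have : ψ.symm (Sum.inl (f u)) = Sum.inl u := by
        rw [← hf u, RelIso.symm_apply_apply]
      rw [hg (f u)] at this
      exact Sum.inl.inj this
    have hfg : ∀ u, f (g u) = u := by
      intro u
      have : ψ (Sum.inl (g u)) = Sum.inl u := by
        rw [← hg u, RelIso.apply_symm_apply]
      rw [hf (g u)] at this
      exact Sum.inl.inj this
    refine ⟨⟨⟨f, g, hgf, hfg⟩, ?_⟩, ?_⟩
    · intro u v
      show G.Adj (f u) (f v) ↔ G.Adj u v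
      constructor
      · intro h
        have h3 := induced_adj hV ψ.symm g hg h
        rwa [hgf, hgf] at h3
      · exact induced_adj hV ψ f hf
    · intro u h
      have hfu : f u = u := h
      apply hψ (Sum.inl u)
      rw [hf u, hfu]
end

section
/- Let G = (V,E) be a finite simple graph with |V| ≥ 4, and let G' be the split construction of G. Then every automorphism of G' maps the set V onto itself. -/
/-- `x` has three pairwise distinct neighbors. -/
def bigDeg {V : Type} (G : SimpleGraph V) (x : V) : Prop :=
  ∃ a b c : V, G.Adj x a ∧ G.Adj x b ∧ G.Adj x c ∧ a ≠ b ∧ a ≠ c ∧ b ≠ c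

lemma bigDeg_iff_inl {V : Type} [Fintype V] (G : SimpleGraph V)
    (hV : 4 ≤ Fintype.card V) (x : V ⊕ (G.edgeSet × Bool)) :
    bigDeg (splitConstruction G) x ↔ x ∈ Set.range (Sum.inl : V → V ⊕ (G.edgeSet × Bool)) := by
  classical
  constructor
  · rintro ⟨a, b, c, ha, hb, hc, hab, hac, hbc⟩
    cases x with
    | inl u => exact ⟨u, rfl⟩
    | inr p =>
      exfalso
      obtain ⟨e, i⟩ := p
      -- each neighbor of inr (e,i) is inl of an endpoint of e
      have key : ∀ y, (splitConstruction G).Adj (Sum.inr (e, i)) y →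
          ∃ u : V, y = Sum.inl u ∧ u ∈ (e : Sym2 V) := by
        intro y hy
        rw [splitConstruction, SimpleGraph.fromRel_adj] at hy
        obtain ⟨-, h | h⟩ := hy
        · rcases h with ⟨u, v, h1, h2⟩ | ⟨u, e', i', h1, h2, h3⟩ <;> simp_all
        · rcases h with ⟨u, v, h1, h2⟩ | ⟨u, e', i', h1, h2, h3⟩
          · simp_all
          · refine ⟨u, h1.symm ▸ rfl, ?_⟩
            obtain ⟨he, hi⟩ : e = e' ∧ i = i' := by
              simpa [Prod.ext_iff] using h2
            subst he
            exact h3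
      obtain ⟨ua, hya, hma⟩ := key a ha
      obtain ⟨ub, hyb, hmb⟩ := key b hb
      obtain ⟨uc, hyc, hmc⟩ := key c hc
      subst hya hyb hyc
      obtain ⟨⟨p, q⟩, hpq⟩ := Quot.exists_rep (e : Sym2 V)
      rw [← hpq] at hma hmb hmc
      have hma' : ua = p ∨ ua = q := Sym2.mem_iff.mp hma
      have hmb' : ub = p ∨ ub = q := Sym2.mem_iff.mp hmb
      have hmc' : uc = p ∨ uc = q := Sym2.mem_iff.mp hmc
      simp only [ne_eq, Sum.inl.injEq] at hab hac hbc
      rcases hma' with rfl | rfl <;> rcases hmb' with rfl | rfl <;>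
        rcases hmc' with rfl | rfl <;> simp_all
  · rintro ⟨u, rfl⟩
    -- find three distinct vertices different from u
    have hcard : 3 ≤ (Finset.univ.erase u).card := by
      rw [Finset.card_erase_of_mem (Finset.mem_univ u), Finset.card_univ]
      omega
    obtain ⟨s, hs, hs3⟩ := Finset.exists_subset_card_eq hcard
    obtain ⟨a, b, c, hab, hac, hbc, rfl⟩ := Finset.card_eq_three.mp hs3
    have hadj : ∀ v : V, v ≠ u → (splitConstruction G).Adj (Sum.inl u) (Sum.inl v) := by
      intro v hv
      rw [splitConstruction, SimpleGraph.fromRel_adj]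
      exact ⟨by simp [Ne, hv.symm], Or.inl (Or.inl ⟨u, v, rfl, rfl⟩)⟩
    have ha : a ≠ u := Finset.ne_of_mem_erase (hs (by simp))
    have hb : b ≠ u := Finset.ne_of_mem_erase (hs (by simp))
    have hc : c ≠ u := Finset.ne_of_mem_erase (hs (by simp))
    exact ⟨_, _, _, hadj a ha, hadj b hb, hadj c hc,
      by simp [hab], by simp [hac], by simp [hbc]⟩

lemma bigDeg_map {V : Type} (G : SimpleGraph V)
    (φ : splitConstruction G ≃g splitConstruction G) (x : V ⊕ (G.edgeSet × Bool))
    (h : bigDeg (splitConstruction G) x) : bigDeg (splitConstruction G) (φ x) := by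
  obtain ⟨a, b, c, ha, hb, hc, hab, hac, hbc⟩ := h
  exact ⟨φ a, φ b, φ c, φ.map_adj_iff.mpr ha, φ.map_adj_iff.mpr hb, φ.map_adj_iff.mpr hc,
    fun h => hab (φ.injective h), fun h => hac (φ.injective h), fun h => hbc (φ.injective h)⟩

/-- every automorphism of the split construction maps the set of original
vertices `V` onto itself. -/
theorem split_aut_preserves_V {V : Type} [Fintype V] (G : SimpleGraph V)
    (hV : 4 ≤ Fintype.card V)
    (φ : splitConstruction G ≃g splitConstruction G) :
    ⇑φ '' Set.range (Sum.inl : V → V ⊕ (G.edgeSet × Bool)) =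
      Set.range (Sum.inl : V → V ⊕ (G.edgeSet × Bool)) := by
  ext x
  constructor
  · rintro ⟨y, hy, rfl⟩
    exact (bigDeg_iff_inl G hV _).mp (bigDeg_map G φ y ((bigDeg_iff_inl G hV y).mpr hy))
  · intro hx
    refine ⟨φ.symm x, ?_, φ.apply_symm_apply x⟩
    exact (bigDeg_iff_inl G hV _).mp (bigDeg_map G φ.symm x ((bigDeg_iff_inl G hV x).mpr hx))
end

section
/- Let G = (V,E) be a connected finite simple graph with |V| ≥ 3, and let G' be the bipartite construction of G. Then every automorphism of G' maps the set V onto itself. -/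
def bipartiteConstruction {V : Type} (G : SimpleGraph V) :
    SimpleGraph (V ⊕ (G.edgeSet × Bool)) :=
  SimpleGraph.fromRel (fun x y =>
    ∃ (u : V) (e : G.edgeSet) (i : Bool),
      x = Sum.inl u ∧ y = Sum.inr (e, i) ∧ u ∈ (e : Sym2 V))

namespace BipAux

variable {V : Type} {G : SimpleGraph V}

lemma adj_inl_inr {u : V} {p : G.edgeSet × Bool} :
    (bipartiteConstruction G).Adj (Sum.inl u) (Sum.inr p) ↔ u ∈ (p.1 : Sym2 V) := by
  rw [bipartiteConstruction, SimpleGraph.fromRel_adj]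
  constructor
  · rintro ⟨-, h | h⟩
    · obtain ⟨u', e, i, h1, h2, h3⟩ := h
      injection h1 with h1
      injection h2 with h2
      subst h1; subst h2; exact h3
    · obtain ⟨u', e, i, h1, -, -⟩ := h
      exact absurd h1 (by simp)
  · intro h
    exact ⟨by simp, Or.inl ⟨u, p.1, p.2, rfl, by simp, h⟩⟩

lemma not_adj_inl_inl {u v : V} :
    ¬ (bipartiteConstruction G).Adj (Sum.inl u) (Sum.inl v) := by
  simp [bipartiteConstruction, SimpleGraph.fromRel_adj]

lemma not_adj_inr_inr {p q : G.edgeSet × Bool} :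
    ¬ (bipartiteConstruction G).Adj (Sum.inr p) (Sum.inr q) := by
  simp [bipartiteConstruction, SimpleGraph.fromRel_adj]

lemma adj_inr_inl {u : V} {p : G.edgeSet × Bool} :
    (bipartiteConstruction G).Adj (Sum.inr p) (Sum.inl u) ↔ u ∈ (p.1 : Sym2 V) := by
  rw [SimpleGraph.adj_comm]; exact adj_inl_inr

def hasTwin {W : Type} (H : SimpleGraph W) (x : W) : Prop :=
  ∃ y, y ≠ x ∧ ¬ H.Adj x y ∧ ∀ z, H.Adj x z ↔ H.Adj y z

lemma hasTwin_map {W : Type} {H : SimpleGraph W} (ψ : H ≃g H) {x : W}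
    (h : hasTwin H x) : hasTwin H (ψ x) := by
  obtain ⟨y, h1, h2, h3⟩ := h
  refine ⟨ψ y, fun hc => h1 (ψ.injective hc), fun hc => h2 ?_, fun z => ?_⟩
  · rwa [ψ.map_adj_iff] at hc
  · rw [← ψ.apply_symm_apply z, ψ.map_adj_iff, ψ.map_adj_iff, h3]

lemma hasTwin_inr (p : G.edgeSet × Bool) :
    hasTwin (bipartiteConstruction G) (Sum.inr p) := by
  refine ⟨Sum.inr (p.1, !p.2), ?_, not_adj_inr_inr, fun z => ?_⟩
  · simp [Prod.ext_iff]
  · cases z with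
    | inl u => rw [adj_inr_inl, adj_inr_inl]
    | inr q => simp [not_adj_inr_inr]

lemma exists_adj [Fintype V] (hconn : G.Connected) (hV : 3 ≤ Fintype.card V) (u : V) :
    ∃ v, G.Adj u v := by
  obtain ⟨w, hw⟩ := Fintype.exists_ne_of_one_lt_card (by omega) u
  obtain ⟨p⟩ := hconn.preconnected u w
  cases p with
  | nil => exact absurd rfl hw
  | cons h _ => exact ⟨_, h⟩

lemma not_hasTwin_inl [Fintype V] (hconn : G.Connected) (hV : 3 ≤ Fintype.card V)
    (u : V) : ¬ hasTwin (bipartiteConstruction G) (Sum.inl u) := by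
  classical
  rintro ⟨y, h1, h2, h3⟩
  obtain ⟨v, hv⟩ := exists_adj hconn hV u
  have he : s(u, v) ∈ G.edgeSet := hv
  cases y with
  | inr q =>
    have := (h3 (Sum.inr (⟨s(u,v), he⟩, true))).mp (by rw [adj_inl_inr]; simp)
    exact not_adj_inr_inr this
  | inl u' =>
    have hne : u' ≠ u := fun h => h1 (by rw [h])
    -- u and u' lie in exactly the same edges
    have hsame : ∀ e : G.edgeSet, u ∈ (e : Sym2 V) ↔ u' ∈ (e : Sym2 V) := by
      intro e
      have := h3 (Sum.inr (e, true))
      rwa [adj_inl_inr, adj_inl_inr] at this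
    have hu'v : u' = v := by
      have := (hsame ⟨s(u,v), he⟩).mp (by simp)
      simp only [Sym2.mem_iff] at this
      rcases this with h | h
      · exact absurd h hne
      · exact h
    have hu_only : ∀ w, G.Adj u w → w = u' := by
      intro w hw
      have := (hsame ⟨s(u,w), hw⟩).mp (by simp)
      simp only [Sym2.mem_iff] at this
      rcases this with h | h
      · exact absurd h hne
      · exact h.symm
    have hu'_only : ∀ w, G.Adj u' w → w = u := by
      intro w hw
      have := (hsame ⟨s(u',w), hw⟩).mpr (by simp)
      simp only [Sym2.mem_iff] at this
      rcases this with h | h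
      · exact absurd h.symm hne
      · exact h.symm
    -- walks from u stay in {u, u'}
    have hwalk : ∀ (a b : V), G.Walk a b → a = u ∨ a = u' → b = u ∨ b = u' := by
      intro a b p
      induction p with
      | nil => exact id
      | cons h p ih =>
        intro ha
        apply ih
        rcases ha with rfl | rfl
        · exact Or.inr (hu_only _ h)
        · exact Or.inl (hu'_only _ h)
    have hne3 : (({u, u'} : Finset V)ᶜ).Nonempty := by
      rw [← Finset.card_pos, Finset.card_compl]
      have h2 : ({u, u'} : Finset V).card ≤ 2 := by
        apply le_trans (Finset.card_insert_le u {u'})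
        simp
      omega
    obtain ⟨w, hw⟩ := hne3
    simp only [Finset.mem_compl, Finset.mem_insert, Finset.mem_singleton, not_or] at hw
    obtain ⟨p⟩ := hconn.preconnected u w
    rcases hwalk u w p (Or.inl rfl) with h | h
    · exact hw.1 h
    · exact hw.2 h

end BipAux

/-- every automorphism of the bipartite construction maps the set of
original vertices `V` onto itself. -/
theorem bipartite_aut_preserves_V {V : Type} [Fintype V] (G : SimpleGraph V)
    (hconn : G.Connected) (hV : 3 ≤ Fintype.card V)
    (φ : bipartiteConstruction G ≃g bipartiteConstruction G) :
    ⇑φ '' Set.range (Sum.inl : V → V ⊕ (G.edgeSet × Bool)) =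
      Set.range (Sum.inl : V → V ⊕ (G.edgeSet × Bool)) := by
  classical
  have key : ∀ x, x ∈ Set.range (Sum.inl : V → V ⊕ (G.edgeSet × Bool)) ↔
      ¬ BipAux.hasTwin (bipartiteConstruction G) x := by
    intro x
    cases x with
    | inl u => simp [BipAux.not_hasTwin_inl hconn hV u]
    | inr p => simp [BipAux.hasTwin_inr p]
  have hstab : ∀ x, φ x ∈ Set.range (Sum.inl : V → V ⊕ (G.edgeSet × Bool)) ↔
      x ∈ Set.range (Sum.inl : V → V ⊕ (G.edgeSet × Bool)) := by
    intro x
    rw [key, key]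
    constructor
    · intro h hx; exact h (BipAux.hasTwin_map φ hx)
    · intro h hx
      have := BipAux.hasTwin_map φ.symm hx
      rw [φ.symm_apply_apply] at this
      exact h this
  ext y
  constructor
  · rintro ⟨x, hx, rfl⟩; exact (hstab x).mpr hx
  · intro hy
    refine ⟨φ.symm y, ?_, φ.apply_symm_apply y⟩
    rw [← hstab, φ.apply_symm_apply]; exact hy
end

section
/- Let G = (V,E) be a connected finite simple graph with |V| ≥ 3, and let G' be the bipartite construction of G. Then every fixed point free automorphism φ of G' fixes no edge of G'; that is, for every edge {x,y} of G' it is not the case that φ(x) = y and φ(y) = x. -/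
lemma bc_adj {V : Type} {G : SimpleGraph V} {x y : V ⊕ (G.edgeSet × Bool)} :
    (bipartiteConstruction G).Adj x y ↔
      (∃ (u : V) (e : G.edgeSet) (i : Bool),
        x = Sum.inl u ∧ y = Sum.inr (e, i) ∧ u ∈ (e : Sym2 V)) ∨
      (∃ (u : V) (e : G.edgeSet) (i : Bool),
        y = Sum.inl u ∧ x = Sum.inr (e, i) ∧ u ∈ (e : Sym2 V)) := by
  rw [bipartiteConstruction, SimpleGraph.fromRel_adj]
  constructor
  · rintro ⟨hne, h | h⟩
    · exact Or.inl h
    · exact Or.inr h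
  · rintro (⟨u, e, i, rfl, rfl, h⟩ | ⟨u, e, i, rfl, rfl, h⟩)
    · exact ⟨by simp, Or.inl ⟨u, e, i, rfl, rfl, h⟩⟩
    · exact ⟨by simp, Or.inr ⟨u, e, i, rfl, rfl, h⟩⟩

lemma bc_key {V : Type} [Fintype V] (G : SimpleGraph V)
    (hconn : G.Connected) (hV : 3 ≤ Fintype.card V)
    (φ : bipartiteConstruction G ≃g bipartiteConstruction G)
    (u : V) (e : G.edgeSet) (i : Bool) (hu : u ∈ (e : Sym2 V))
    (h1 : φ (Sum.inl u) = Sum.inr (e, i))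
    (h2 : φ (Sum.inr (e, i)) = Sum.inl u) : False := by
  classical
  obtain ⟨v, hev⟩ := Sym2.mem_iff_exists.mp hu
  have huv : G.Adj u v := G.mem_edgeSet.mp (hev ▸ e.2)
  have hne : u ≠ v := huv.ne
  have hvmem : v ∈ (e : Sym2 V) := by rw [hev]; simp
  -- basic adjacencies
  have adjl : ∀ (w : V) (j : Bool), w ∈ (e : Sym2 V) →
      (bipartiteConstruction G).Adj (Sum.inl w) (Sum.inr (e, j)) :=
    fun w j hw => bc_adj.mpr (Or.inl ⟨w, e, j, rfl, rfl, hw⟩)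
  -- neighbors of inr (e, j) are inl u or inl v
  have hnbr : ∀ (j : Bool) (n), (bipartiteConstruction G).Adj (Sum.inr (e, j)) n →
      n = Sum.inl u ∨ n = Sum.inl v := by
    intro j n h
    rcases bc_adj.mp h with ⟨a, f, k, h1', _, _⟩ | ⟨a, f, k, h1', h2', h3'⟩
    · exact absurd h1' (by simp)
    · obtain ⟨rfl, rfl⟩ : e = f ∧ j = k := by simpa using h2'
      rw [hev, Sym2.mem_iff] at h3'
      rcases h3' with rfl | rfl
      · exact Or.inl h1'
      · exact Or.inr h1'
  -- neighbors of inl w are of the form inr (f, k) with w ∈ f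
  have hnbl : ∀ (w : V) (n), (bipartiteConstruction G).Adj (Sum.inl w) n →
      ∃ (f : G.edgeSet) (k : Bool), n = Sum.inr (f, k) ∧ w ∈ (f : Sym2 V) := by
    intro w n h
    rcases bc_adj.mp h with ⟨a, f, k, h1', h2', h3'⟩ | ⟨a, f, k, h1', h2', _⟩
    · obtain rfl : w = a := Sum.inl.inj h1'
      exact ⟨f, k, h2', h3'⟩
    · exact absurd h2' (by simp)
  have hinj : Function.Injective φ := φ.toEquiv.injective
  -- φ (inr (e, !i)) = inl v
  have h3 : φ (Sum.inr (e, !i)) = Sum.inl v := by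
    have hadj : (bipartiteConstruction G).Adj (φ (Sum.inr (e, !i))) (Sum.inr (e, i)) := by
      rw [← h1]; exact φ.map_adj_iff.mpr ((adjl u (!i) hu).symm)
    rcases hnbr i _ hadj.symm with h | h
    · rw [← h2] at h
      have := hinj h
      simp at this
    · exact h
  -- φ (inl v) = inr (e, !i)
  have h4 : φ (Sum.inl v) = Sum.inr (e, !i) := by
    have hadj1 : (bipartiteConstruction G).Adj (Sum.inl u) (φ (Sum.inl v)) := by
      have := φ.map_adj_iff.mpr (adjl v i hvmem)
      rw [h2] at this
      exact this.symm
    obtain ⟨f, k, hfk, huf⟩ := hnbl u _ hadj1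
    have hadj2 : (bipartiteConstruction G).Adj (Sum.inl v) (φ (Sum.inl v)) := by
      have := φ.map_adj_iff.mpr (adjl v (!i) hvmem)
      rw [h3] at this
      exact this.symm
    have hvf : v ∈ (f : Sym2 V) := by
      obtain ⟨f', k', hfk', hvf'⟩ := hnbl v _ hadj2
      rw [hfk] at hfk'
      obtain ⟨hf, _⟩ := Prod.mk.injEq _ _ _ _ ▸ Sum.inr.inj hfk'
      rwa [hf]
    have hfe : f = e := by
      apply Subtype.ext
      rw [hev, ← (Sym2.mem_and_mem_iff hne).mp ⟨huf, hvf⟩]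
    subst hfe
    rcases Bool.eq_or_eq_not k i with rfl | rfl
    · exfalso
      rw [← h1] at hfk
      exact hne (Sum.inl.inj (hinj hfk)).symm
    · exact hfk
  -- any neighbor of inl u or inl v is inr (e, j)
  have honly : ∀ (w : V) (f : G.edgeSet), w ∈ (f : Sym2 V) →
      (φ (Sum.inl w) = Sum.inr (e, i) ∨ φ (Sum.inl w) = Sum.inr (e, !i)) → f = e := by
    intro w f hwf hw
    have hadj : (bipartiteConstruction G).Adj (φ (Sum.inr (f, true))) (φ (Sum.inl w)) :=
      φ.map_adj_iff.mpr ((bc_adj.mpr (Or.inl ⟨w, f, true, rfl, rfl, hwf⟩)).symm)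
    have : φ (Sum.inr (f, true)) = Sum.inl u ∨ φ (Sum.inr (f, true)) = Sum.inl v := by
      rcases hw with hw | hw
      · rw [hw] at hadj; exact hnbr i _ hadj.symm
      · rw [hw] at hadj; exact hnbr (!i) _ hadj.symm
    rcases this with h | h
    · rw [← h2] at h
      have := hinj h
      exact congrArg Prod.fst (Sum.inr.inj this)
    · rw [← h3] at h
      have := hinj h
      exact congrArg Prod.fst (Sum.inr.inj this)
  -- degrees: u's only neighbor is v, v's only neighbor is u
  have hudeg : ∀ w, G.Adj u w → w = v := by
    intro w hw
    have hfe := honly u ⟨s(u, w), hw⟩ (by simp) (Or.inl h1)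
    have : s(u, w) = s(u, v) := by rw [← hev]; exact congrArg Subtype.val hfe
    rcases Sym2.eq_iff.mp this with ⟨_, h⟩ | ⟨h, _⟩
    · exact h
    · exact absurd h hne
  have hvdeg : ∀ w, G.Adj v w → w = u := by
    intro w hw
    have hfe := honly v ⟨s(v, w), hw⟩ (by simp) (Or.inr h4)
    have : s(v, w) = s(u, v) := by rw [← hev]; exact congrArg Subtype.val hfe
    rcases Sym2.eq_iff.mp this with ⟨h, _⟩ | ⟨_, h⟩
    · exact absurd h.symm hne
    · exact h
  -- get a third vertex
  have hw : ∃ w : V, w ≠ u ∧ w ≠ v := by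
    by_contra hcon
    push_neg at hcon
    have hsub : (Finset.univ : Finset V) ⊆ {u, v} := by
      intro w _
      simp only [Finset.mem_insert, Finset.mem_singleton]
      by_cases h : w = u
      · exact Or.inl h
      · exact Or.inr (hcon w h)
    have hc1 := Finset.card_le_card hsub
    have hc2 : ({u, v} : Finset V).card ≤ 2 :=
      (Finset.card_insert_le _ _).trans (by simp)
    rw [Finset.card_univ] at hc1
    omega
  obtain ⟨w, hwu, hwv⟩ := hw
  -- every vertex reachable from u is u or v
  have hwalk : ∀ (a b : V), G.Walk a b → (a = u ∨ a = v) → (b = u ∨ b = v) := by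
    intro a b p
    induction p with
    | nil => exact id
    | cons h _ ih =>
      rintro (rfl | rfl)
      · exact ih (Or.inr (hudeg _ h))
      · exact ih (Or.inl (hvdeg _ h))
  obtain ⟨p⟩ := hconn u w
  rcases hwalk u w p (Or.inl rfl) with h | h
  · exact hwu h
  · exact hwv h

/-- every fixed point free automorphism of the bipartite construction fixes
no edge: for every edge `{x, y}` it is not the case that `φ x = y` and `φ y = x`. -/
theorem bipartite_fpfAut_fixedEdgeFree {V : Type} [Fintype V] (G : SimpleGraph V)
    (hconn : G.Connected) (hV : 3 ≤ Fintype.card V)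
    (φ : bipartiteConstruction G ≃g bipartiteConstruction G)
    (hfpf : ∀ x, φ x ≠ x) :
    ∀ x y, (bipartiteConstruction G).Adj x y → ¬(φ x = y ∧ φ y = x) := by
  rintro x y hadj ⟨h1, h2⟩
  rcases bc_adj.mp hadj with ⟨u, e, i, rfl, rfl, h⟩ | ⟨u, e, i, rfl, rfl, h⟩
  · exact bc_key G hconn hV φ u e i h h1 h2
  · exact bc_key G hconn hV φ u e i h h2 h1
end

section
/- Let G = (V,E) be a connected finite simple graph with |V| ≥ 3, let G' be the bipartite construction of G, and let k ≥ 1. Then the k-subdivision S_k(G') admits a fixed point free automorphism if and only if G admits a fixed point free automorphism. -/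
/-- The `k`-subdivision of a graph `H`: each edge of `H` is replaced by a path with `k`
internal vertices.  A linear order on the vertices is used to pick, for each edge, which
endpoint is attached to the internal vertex of index `0` (any choice gives the same graph
up to isomorphism). -/
def kSubdivision {W : Type} (L : LinearOrder W) (k : ℕ) (H : SimpleGraph W) :
    SimpleGraph (W ⊕ (H.edgeSet × Fin k)) :=
  letI := L
  SimpleGraph.fromRel (fun x y =>
    (∃ (e : H.edgeSet) (j : Fin k),
       x = Sum.inl (Sym2.inf (e : Sym2 W)) ∧ y = Sum.inr (e, j) ∧ (j : ℕ) = 0) ∨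
    (∃ (e : H.edgeSet) (j : Fin k),
       x = Sum.inl (Sym2.sup (e : Sym2 W)) ∧ y = Sum.inr (e, j) ∧ (j : ℕ) = k - 1) ∨
    (∃ (e : H.edgeSet) (i j : Fin k),
       x = Sum.inr (e, i) ∧ y = Sum.inr (e, j) ∧ (i : ℕ) + 1 = (j : ℕ)))
/-!
Inside `S_k(H)` the vertices of `H` are recognised metrically. Measured from a vertex `inl w₀`,
a vertex `inl w` lies at distance `(k + 1) d_H(w₀, w)`, while the `j`-th internal vertex of the
path of an edge lies at distance `(k + 1) d + r`, with `d` a distance in `H` and `r = j + 1` or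
`r = k - j` in `[1, k]`, so never at a multiple of `k + 1`. Internal vertices have degree two, so
an automorphism of `S_k(H)` maps a vertex of degree at least three to some `inl w₀`; hence it
preserves `V(H)` and, `H`-adjacency being distance `k + 1`, restricts to an automorphism of `H`,
still without fixed points. The same
argument with parity in place of divisibility descends from `G'` to `G`: a connected graph with at
least three vertices has a vertex with two neighbours, which has degree at least four in `G'`.

Conversely, an automorphism `φ` of `G` lifts to `G'` by also swapping the two copies of every
edge. The lift fixes no vertex and no edge of `G'`, so it extends to `S_k(G')` without fixed
points by carrying the path of each edge onto the path of its image, reversed where the fixed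
linear order demands it.
-/

open SimpleGraph Sum

namespace SimpleGraph

variable {α β : Type} {A : SimpleGraph α} {B : SimpleGraph β}

theorem Hom.edist_le (f : A →g B) (u v : α) : B.edist (f u) (f v) ≤ A.edist u v := by
  rw [edist_eq_sInf (G := A)]
  refine le_sInf ?_
  rintro _ ⟨p, rfl⟩
  simpa using SimpleGraph.edist_le (p.map f)

theorem Iso.edist_map (φ : A ≃g B) (u v : α) : B.edist (φ u) (φ v) = A.edist u v :=
  le_antisymm (φ.toHom.edist_le u v) (by simpa using φ.symm.toHom.edist_le (φ u) (φ v))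

theorem Iso.dist_map (φ : A ≃g B) (u v : α) : B.dist (φ u) (φ v) = A.dist u v := by
  simp only [dist, φ.edist_map]

theorem dist_eq_two_iff {u v : α} : A.dist u v = 2 ↔ A.edist u v = 2 :=
  ENat.toNat_eq_iff two_ne_zero

def IsBranchVertex (A : SimpleGraph α) (x : α) : Prop :=
  2 < (A.neighborSet x).encard

theorem Iso.isBranchVertex_apply_iff (φ : A ≃g B) {x : α} :
    B.IsBranchVertex (φ x) ↔ A.IsBranchVertex x := by
  rw [IsBranchVertex, IsBranchVertex, ← φ.image_neighborSet, φ.injective.encard_image]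

theorem isBranchVertex_of_adj {x a b c : α} (hab : a ≠ b) (hac : a ≠ c) (hbc : b ≠ c)
    (ha : A.Adj x a) (hb : A.Adj x b) (hc : A.Adj x c) : A.IsBranchVertex x := by
  have h3 : ({a, b, c} : Set α).encard = 3 :=
    Set.encard_eq_three.mpr ⟨a, b, c, hab, hac, hbc, rfl⟩
  have hsub : ({a, b, c} : Set α) ⊆ A.neighborSet x := by
    simp [Set.insert_subset_iff, ha, hb, hc]
  unfold IsBranchVertex
  calc (2 : ℕ∞) < 3 := by norm_num
    _ = _ := h3.symm
    _ ≤ _ := Set.encard_le_encard hsub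

theorem IsBranchVertex.exists_adj {x : α} (h : A.IsBranchVertex x) :
    ∃ a b c, a ≠ b ∧ a ≠ c ∧ b ≠ c ∧ A.Adj x a ∧ A.Adj x b ∧ A.Adj x c := by
  obtain ⟨t, ht, ht3⟩ := Set.exists_subset_encard_eq (Order.add_one_le_of_lt h)
  obtain ⟨a, b, c, hab, hac, hbc, rfl⟩ := Set.encard_eq_three.mp ht3
  simp only [Set.insert_subset_iff, Set.singleton_subset_iff] at ht
  exact ⟨a, b, c, hab, hac, hbc, ht⟩

theorem not_isBranchVertex_of_adj {x a b : α} (h : ∀ y, A.Adj x y → y = a ∨ y = b) :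
    ¬ A.IsBranchVertex x := by
  have hsub : A.neighborSet x ⊆ {a, b} := fun y hy => h y hy
  rw [IsBranchVertex, not_lt]
  calc (A.neighborSet x).encard ≤ ({a, b} : Set α).encard := Set.encard_le_encard hsub
    _ ≤ ({b} : Set α).encard + 1 := Set.encard_insert_le _ _
    _ = 2 := by rw [Set.encard_singleton]; rfl

theorem dist_eq_of_potential {z : α} (f : α → ℕ) (hz : ∀ x, f x = 0 ↔ x = z)
    (hlip : ∀ x y, A.Adj x y → f x ≤ f y + 1)
    (hdesc : ∀ x, 0 < f x → ∃ y, A.Adj x y ∧ f y < f x) (x : α) :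
    A.dist x z = f x := by
  have lower : ∀ {x y} (p : A.Walk x y), f x ≤ f y + p.length := by
    intro x y p
    induction p with
    | nil => simp
    | cons h p ih => have := hlip _ _ h; simp only [Walk.length_cons]; omega
  have walk : ∀ n x, f x = n → ∃ p : A.Walk x z, p.length = n := by
    intro n
    induction n with
    | zero => intro x hx; obtain rfl := (hz x).mp hx; exact ⟨Walk.nil, rfl⟩
    | succ n ih =>
      intro x hx
      obtain ⟨y, hxy, hy⟩ := hdesc x (by omega)
      obtain ⟨p, hp⟩ := ih y (by have := hlip x y hxy; omega)
      exact ⟨Walk.cons hxy p, by simp [hp]⟩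
  obtain ⟨p, hp⟩ := walk _ x rfl
  obtain ⟨q, hq⟩ := Reachable.exists_walk_length_eq_dist ⟨p⟩
  have := lower q
  rw [(hz z).mpr rfl] at this
  exact le_antisymm (hp ▸ dist_le p) (by omega)

theorem Connected.exists_adj_adj_ne (hc : A.Connected) {x y z : α} (hxy : x ≠ y) (hxz : x ≠ z)
    (hyz : y ≠ z) : ∃ v a b, a ≠ b ∧ A.Adj v a ∧ A.Adj v b := by
  have key : ∀ y, x ≠ y → A.Adj x y ∨ ∃ v a b, a ≠ b ∧ A.Adj v a ∧ A.Adj v b := by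
    intro y hxy
    by_cases h : 1 < A.dist x y
    · obtain ⟨p, hp⟩ := hc.exists_walk_length_eq_dist x y
      obtain ⟨u, a, b, hua, hab, -, hub⟩ := p.exists_adj_adj_not_adj_ne hp h
      exact Or.inr ⟨a, u, b, hub, hua.symm, hab⟩
    · have := hc.pos_dist_of_ne hxy
      exact Or.inl (dist_eq_one_iff_adj.mp (by omega))
  rcases key y hxy with hy | h
  · rcases key z hxz with hz | h
    · exact ⟨x, y, z, hyz, hy, hz⟩
    · exact h
  · exact h

theorem Adj.mul_dist_le {a b : α} (h : A.Adj a b) (u : α) (c : ℕ) :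
    c * A.dist u a ≤ c * A.dist u b + c := by
  have := h.symm.diff_dist_adj (u := u)
  simpa [mul_add] using Nat.mul_le_mul_left c (by omega : A.dist u a ≤ A.dist u b + 1)

theorem Connected.exists_adj_dist_lt (hc : A.Connected) {u w : α} (h : w ≠ u) :
    ∃ m, A.Adj w m ∧ A.dist u m < A.dist u w := by
  obtain ⟨p, hp⟩ := hc.exists_walk_length_eq_dist w u
  cases p with
  | nil => exact absurd rfl h
  | cons hadj q =>
    refine ⟨_, hadj, ?_⟩
    have := dist_le q
    rw [Walk.length_cons] at hp
    rw [dist_comm, dist_comm (u := u)]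
    omega

end SimpleGraph

section LeftSummand

variable {V X : Type} {A : SimpleGraph (V ⊕ X)} {G : SimpleGraph V}

theorem SimpleGraph.Iso.isLeft_apply_of_dvd_dist (φ : A ≃g A) {m : ℕ}
    (hb : ∃ b, A.IsBranchVertex b)
    (hdvd : ∀ b, A.IsBranchVertex b → ∀ x, x.isLeft ↔ m ∣ A.dist x b) (x : V ⊕ X) :
    (φ x).isLeft ↔ x.isLeft := by
  obtain ⟨b, hb⟩ := hb
  rw [hdvd (φ b) (φ.isBranchVertex_apply_iff.mpr hb), φ.dist_map, hdvd b hb]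

theorem SimpleGraph.Iso.exists_iso_of_isLeft (φ : A ≃g A)
    (hφ : ∀ x, (φ x).isLeft ↔ x.isLeft) {c : ℕ}
    (hadj : ∀ a b, G.Adj a b ↔ A.dist (inl a) (inl b) = c) :
    ∃ f : G ≃g G, ∀ v, φ (inl v) = inl (f v) := by
  let e : V ≃ V := Equiv.sumIsLeft.symm.trans
    ((φ.toEquiv.subtypeEquiv fun x => (hφ x).symm).trans Equiv.sumIsLeft)
  have he : ∀ v, φ (inl v) = inl (e v) := fun v => by simp [e]
  refine ⟨⟨e, fun {a b} => ?_⟩, he⟩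
  rw [hadj, hadj, ← he, ← he, φ.dist_map]

theorem HasFPFAut.of_isLeft_iff_dvd_dist {m c : ℕ} (hb : ∃ b, A.IsBranchVertex b)
    (hdvd : ∀ b, A.IsBranchVertex b → ∀ x, x.isLeft ↔ m ∣ A.dist x b)
    (hadj : ∀ a b, G.Adj a b ↔ A.dist (inl a) (inl b) = c) (h : HasFPFAut A) :
    HasFPFAut G := by
  obtain ⟨φ, hφ⟩ := h
  obtain ⟨f, hf⟩ := φ.exists_iso_of_isLeft (φ.isLeft_apply_of_dvd_dist hb hdvd) hadj
  exact ⟨f, fun v hv => hφ (inl v) (by rw [hf, hv])⟩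

end LeftSummand

namespace bipartiteConstruction

variable {V : Type} {G : SimpleGraph V}

@[simp] theorem adj_inl_inr {u : V} {e : G.edgeSet} {i : Bool} :
    (bipartiteConstruction G).Adj (inl u) (inr (e, i)) ↔ u ∈ (e : Sym2 V) := by
  simp [bipartiteConstruction, -Subtype.exists, -Bool.exists_bool]

@[simp] theorem adj_inr_inl {u : V} {e : G.edgeSet} {i : Bool} :
    (bipartiteConstruction G).Adj (inr (e, i)) (inl u) ↔ u ∈ (e : Sym2 V) := by
  simp [bipartiteConstruction, -Subtype.exists, -Bool.exists_bool]

@[simp] theorem not_adj_inl_inl {u v : V} : ¬ (bipartiteConstruction G).Adj (inl u) (inl v) := by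
  simp [bipartiteConstruction, -Subtype.exists, -Bool.exists_bool]

@[simp] theorem not_adj_inr_inr {p q : G.edgeSet × Bool} :
    ¬ (bipartiteConstruction G).Adj (inr p) (inr q) := by
  simp [bipartiteConstruction, -Subtype.exists, -Bool.exists_bool]

theorem reachable_inl_inl_of_adj {u v : V} (h : G.Adj u v) :
    (bipartiteConstruction G).Reachable (inl u) (inl v) :=
  have hu : (bipartiteConstruction G).Adj (inl u) (inr (⟨s(u, v), h⟩, true)) := by simp
  have hv : (bipartiteConstruction G).Adj (inl v) (inr (⟨s(u, v), h⟩, true)) := by simp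
  hu.reachable.trans hv.reachable.symm

theorem connected (hc : G.Connected) : (bipartiteConstruction G).Connected := by
  have hinl : ∀ u v, (bipartiteConstruction G).Reachable (inl u) (inl v) := fun u v => by
    obtain ⟨p⟩ := hc.preconnected u v
    induction p with
    | nil => rfl
    | cons h _ ih => exact (reachable_inl_inl_of_adj h).trans ih
  have hx : ∀ x, ∃ u, (bipartiteConstruction G).Reachable x (inl u) := by
    rintro (u | ⟨e, i⟩)
    · exact ⟨u, .rfl⟩
    · exact ⟨_, (adj_inr_inl (i := i).mpr (Sym2.out_fst_mem e.1)).reachable⟩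
  obtain ⟨v⟩ := hc.nonempty
  refine (connected_iff _).mpr ⟨fun x y => ?_, ⟨inl v⟩⟩
  obtain ⟨u, hu⟩ := hx x
  obtain ⟨w, hw⟩ := hx y
  exact hu.trans ((hinl u w).trans hw.symm)

def sideColoring : (bipartiteConstruction G).Coloring Bool :=
  Coloring.mk Sum.isLeft fun {x y} h => by
    rcases x with _ | _ <;> rcases y with _ | ⟨_, _⟩ <;> simp_all

theorem isLeft_iff_even_dist (hc : G.Connected) (x : V ⊕ (G.edgeSet × Bool)) (v : V) :
    x.isLeft ↔ Even ((bipartiteConstruction G).dist x (inl v)) := by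
  obtain ⟨p, hp⟩ := (connected hc).exists_walk_length_eq_dist x (inl v)
  rw [← hp, sideColoring.even_length_iff_congr p]
  show _ ↔ (x.isLeft ↔ true)
  simp

theorem adj_iff_dist_eq_two (a b : V) :
    G.Adj a b ↔ (bipartiteConstruction G).dist (inl a) (inl b) = 2 := by
  rw [dist_eq_two_iff, edist_eq_two_iff]
  constructor
  · intro h
    exact ⟨by simpa using h.ne, not_adj_inl_inl,
      ⟨inr (⟨s(a, b), h⟩, true), by simp [mem_commonNeighbors]⟩⟩
  · rintro ⟨hne, -, (u | ⟨e, i⟩), hu⟩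
    · simp [mem_commonNeighbors] at hu
    · rw [mem_commonNeighbors, adj_inl_inr, adj_inl_inr] at hu
      have he := e.2
      rwa [(Sym2.mem_and_mem_iff (by simpa using hne)).mp hu] at he

theorem not_isBranchVertex_inr (e : G.edgeSet) (i : Bool) :
    ¬ (bipartiteConstruction G).IsBranchVertex (inr (e, i)) := by
  induction e using Subtype.rec with | _ e he
  induction e using Sym2.ind with | _ a b
  refine not_isBranchVertex_of_adj (a := inl a) (b := inl b) ?_
  rintro (u | _) h
  · simpa using h
  · simp at h

theorem isBranchVertex_inl {v u₁ u₂ : V} (h₁ : G.Adj v u₁) (h₂ : G.Adj v u₂)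
    (hne : u₁ ≠ u₂) :
    (bipartiteConstruction G).IsBranchVertex (inl v) := by
  have hE : (⟨s(v, u₁), h₁⟩ : G.edgeSet) ≠ ⟨s(v, u₂), h₂⟩ := by
    simp [Subtype.ext_iff, hne, h₁.ne']
  exact isBranchVertex_of_adj (a := inr (⟨s(v, u₁), h₁⟩, true))
    (b := inr (⟨s(v, u₁), h₁⟩, false)) (c := inr (⟨s(v, u₂), h₂⟩, true))
    (by simp) (by simp [hE]) (by simp [hE]) (by simp) (by simp) (by simp)

def swapIso (φ : G ≃g G) : bipartiteConstruction G ≃g bipartiteConstruction G where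
  toEquiv := φ.toEquiv.sumCongr (φ.mapEdgeSet.prodCongr Equiv.boolNot)
  map_rel_iff' {x y} := by
    rcases x with _ | ⟨_, _⟩ <;> rcases y with _ | ⟨_, _⟩ <;> simp [Sym2.mem_map]

@[simp] theorem swapIso_inl (φ : G ≃g G) (v : V) : swapIso φ (inl v) = inl (φ v) := rfl

@[simp] theorem swapIso_inr (φ : G ≃g G) (e : G.edgeSet) (i : Bool) :
    swapIso φ (inr (e, i)) = inr (φ.mapEdgeSet e, !i) := rfl

theorem swapIso_apply_ne {φ : G ≃g G} (hφ : ∀ v, φ v ≠ v) (x : V ⊕ (G.edgeSet × Bool)) :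
    swapIso φ x ≠ x := by
  rcases x with v | ⟨e, i⟩ <;> simp [hφ]

theorem swapIso_map_ne (φ : G ≃g G)
    {e : Sym2 (V ⊕ (G.edgeSet × Bool))} (he : e ∈ (bipartiteConstruction G).edgeSet) :
    e.map (swapIso φ) ≠ e := by
  induction e using Sym2.ind with | _ x y
  rcases x with _ | ⟨_, _⟩ <;> rcases y with _ | ⟨_, _⟩ <;> simp_all

end bipartiteConstruction

open bipartiteConstruction in
theorem HasFPFAut.of_bipartiteConstruction {V : Type} {G : SimpleGraph V} (hc : G.Connected)
    (hb : ∃ b, (bipartiteConstruction G).IsBranchVertex b)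
    (h : HasFPFAut (bipartiteConstruction G)) : HasFPFAut G := by
  refine h.of_isLeft_iff_dvd_dist hb (m := 2) ?_ adj_iff_dist_eq_two
  rintro (v | ⟨e, i⟩) hv x
  · rw [isLeft_iff_even_dist hc, even_iff_two_dvd]
  · exact absurd hv (not_isBranchVertex_inr e i)

theorem Sym2.mk_inf_sup {W : Type} [LinearOrder W] (s : Sym2 W) : s(s.inf, s.sup) = s :=
  Sym2.sortEquiv.symm_apply_apply s

namespace kSubdivision

variable {W : Type} [L : LinearOrder W] {k : ℕ} {H : SimpleGraph W}

theorem adj_inf_sup (E : H.edgeSet) : H.Adj (E : Sym2 W).inf (E : Sym2 W).sup := by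
  simp [← mem_edgeSet, Sym2.mk_inf_sup]

@[simp] theorem not_adj_inl_inl {a b : W} : ¬ (kSubdivision L k H).Adj (inl a) (inl b) := by
  simp [kSubdivision]

@[simp] theorem adj_inl_inr {w : W} {E : H.edgeSet} {j : Fin k} :
    (kSubdivision L k H).Adj (inl w) (inr (E, j)) ↔
      w = (E : Sym2 W).inf ∧ (j : ℕ) = 0 ∨ w = (E : Sym2 W).sup ∧ (j : ℕ) = k - 1 := by
  simp [kSubdivision, -Subtype.exists, eq_comm]

@[simp] theorem adj_inr_inl {w : W} {E : H.edgeSet} {j : Fin k} :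
    (kSubdivision L k H).Adj (inr (E, j)) (inl w) ↔
      w = (E : Sym2 W).inf ∧ (j : ℕ) = 0 ∨ w = (E : Sym2 W).sup ∧ (j : ℕ) = k - 1 := by
  rw [adj_comm, adj_inl_inr]

@[simp] theorem adj_inr_inr {E E' : H.edgeSet} {i j : Fin k} :
    (kSubdivision L k H).Adj (inr (E, i)) (inr (E', j)) ↔
      E = E' ∧ ((i : ℕ) + 1 = j ∨ (j : ℕ) + 1 = i) := by
  simp only [kSubdivision, fromRel_adj]
  grind

/-- The vertex at position `i` on the path that replaces the edge `E`, counted from the endpoint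
`E.inf` (position `0`) to `E.sup` (position `k + 1`). -/
def pathVertex (E : H.edgeSet) (i : ℕ) : W ⊕ (H.edgeSet × Fin k) :=
  if _ : i = 0 then inl (E : Sym2 W).inf
  else if h : i ≤ k then inr (E, ⟨i - 1, by omega⟩) else inl (E : Sym2 W).sup

@[simp] theorem pathVertex_zero (E : H.edgeSet) :
    (pathVertex E 0 : W ⊕ (H.edgeSet × Fin k)) = inl (E : Sym2 W).inf := rfl

@[simp] theorem pathVertex_succ (E : H.edgeSet) (j : Fin k) :
    pathVertex E (j + 1) = inr (E, j) := by
  simp [pathVertex, Nat.succ_le_of_lt j.2]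

theorem pathVertex_eq_inr (E : H.edgeSet) {i : ℕ} (j : Fin k) (h : i = j + 1) :
    pathVertex E i = inr (E, j) :=
  h ▸ pathVertex_succ E j

theorem pathVertex_of_lt (E : H.edgeSet) {i : ℕ} (hi : k < i) :
    (pathVertex E i : W ⊕ (H.edgeSet × Fin k)) = inl (E : Sym2 W).sup := by
  simp [pathVertex, Nat.not_le_of_lt hi, Nat.ne_zero_of_lt hi]

theorem adj_pathVertex (hk : 1 ≤ k) (E : H.edgeSet) {i : ℕ} (hi : i ≤ k) :
    (kSubdivision L k H).Adj (pathVertex E i) (pathVertex E (i + 1)) := by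
  unfold pathVertex
  split_ifs <;> simp_all <;> omega

theorem adj_iff (hk : 1 ≤ k) {x y : W ⊕ (H.edgeSet × Fin k)} :
    (kSubdivision L k H).Adj x y ↔
      ∃ E, ∃ i ≤ k, s(x, y) = s(pathVertex E i, pathVertex E (i + 1)) := by
  have inl_inr : ∀ w E j, (kSubdivision L k H).Adj (inl w) (inr (E, j)) →
      ∃ E', ∃ i ≤ k, s(inl w, inr (E, j)) = s(pathVertex E' i, pathVertex E' (i + 1)) := by
    intro w E j h
    rw [adj_inl_inr] at h
    obtain ⟨rfl, hj⟩ | ⟨rfl, hj⟩ := h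
    · exact ⟨E, 0, Nat.zero_le k, by rw [pathVertex_zero, pathVertex_eq_inr E j (by omega)]⟩
    · refine ⟨E, k, le_rfl, ?_⟩
      rw [pathVertex_of_lt E (Nat.lt_succ_self k), pathVertex_eq_inr E j (by omega),
        Sym2.eq_swap]
  refine ⟨fun h => ?_, fun ⟨E, i, hi, h⟩ => ?_⟩
  · rcases x with w | ⟨E, i⟩ <;> rcases y with w' | ⟨E', j⟩
    · simp at h
    · exact inl_inr w E' j h
    · rw [Sym2.eq_swap]
      exact inl_inr w' E i h.symm
    · obtain ⟨rfl, hij | hji⟩ := adj_inr_inr.mp h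
      · exact ⟨E, i + 1, i.2, by rw [pathVertex_succ, pathVertex_eq_inr E j (by omega)]⟩
      · refine ⟨E, j + 1, j.2, ?_⟩
        rw [pathVertex_succ, pathVertex_eq_inr E i (by omega), Sym2.eq_swap]
  · rw [← mem_edgeSet, h, mem_edgeSet]
    exact adj_pathVertex hk E hi

/-- The internal vertex `(E, j)` lies at distance `j + 1` from `E.inf` and `k - j` from `E.sup`. -/
noncomputable def distToInl (w₀ : W) : W ⊕ (H.edgeSet × Fin k) → ℕ
  | inl w => (k + 1) * H.dist w₀ w
  | inr (E, j) => min (j + 1 + (k + 1) * H.dist w₀ (E : Sym2 W).inf)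
      (k - j + (k + 1) * H.dist w₀ (E : Sym2 W).sup)

theorem distToInl_pathVertex (w₀ : W) (E : H.edgeSet) {i : ℕ} (hi : i ≤ k + 1) :
    distToInl w₀ (pathVertex E i : W ⊕ (H.edgeSet × Fin k)) =
      min (i + (k + 1) * H.dist w₀ (E : Sym2 W).inf)
        (k + 1 - i + (k + 1) * H.dist w₀ (E : Sym2 W).sup) := by
  have h₁ := (adj_inf_sup E).mul_dist_le w₀ (k + 1)
  have h₂ := (adj_inf_sup E).symm.mul_dist_le w₀ (k + 1)
  unfold pathVertex
  split_ifs <;> simp only [distToInl] <;> omega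

theorem distToInl_le_of_adj (hk : 1 ≤ k) (w₀ : W) {x y : W ⊕ (H.edgeSet × Fin k)}
    (h : (kSubdivision L k H).Adj x y) : distToInl w₀ x ≤ distToInl w₀ y + 1 := by
  obtain ⟨E, i, hi, hxy⟩ := (adj_iff hk).mp h
  have h₀ := distToInl_pathVertex w₀ E (by omega : i ≤ k + 1)
  have h₁ := distToInl_pathVertex w₀ E (by omega : i + 1 ≤ k + 1)
  rcases Sym2.eq_iff.mp hxy with ⟨rfl, rfl⟩ | ⟨rfl, rfl⟩ <;> omega

theorem distToInl_eq_zero_iff (hc : H.Connected) (w₀ : W) (x : W ⊕ (H.edgeSet × Fin k)) :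
    distToInl w₀ x = 0 ↔ x = inl w₀ := by
  rcases x with w | ⟨E, j⟩
  · simp [distToInl, hc.dist_eq_zero_iff, eq_comm]
  · simp only [distToInl, reduceCtorEq, iff_false]
    omega

theorem exists_adj_inl_inr (hk : 1 ≤ k) (w₀ : W) {E : H.edgeSet} {w m : W}
    (hE : (E : Sym2 W) = s(w, m)) : ∃ j, (kSubdivision L k H).Adj (inl w) (inr (E, j)) ∧
      distToInl w₀ (inr (E, j)) ≤ k + (k + 1) * H.dist w₀ m := by
  rcases Sym2.eq_iff.mp ((Sym2.mk_inf_sup (E : Sym2 W)).trans hE) with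
    ⟨hinf, hsup⟩ | ⟨hinf, hsup⟩
  · refine ⟨⟨0, hk⟩, by simp [hinf], ?_⟩
    simp only [distToInl, hsup]
    omega
  · refine ⟨⟨k - 1, by omega⟩, by simp [hsup], ?_⟩
    simp only [distToInl, hinf]
    omega

theorem exists_adj_distToInl_lt (hc : H.Connected) (hk : 1 ≤ k) (w₀ : W)
    {x : W ⊕ (H.edgeSet × Fin k)} (hx : 0 < distToInl w₀ x) :
    ∃ y, (kSubdivision L k H).Adj x y ∧ distToInl w₀ y < distToInl w₀ x := by
  rcases x with w | ⟨E, j⟩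
  · have hw : w ≠ w₀ := fun h => by simp [distToInl, h] at hx
    obtain ⟨m, hm, hlt⟩ := hc.exists_adj_dist_lt hw
    obtain ⟨j, hadj, hj⟩ := exists_adj_inl_inr (E := ⟨s(w, m), hm⟩) hk w₀ rfl
    refine ⟨_, hadj, hj.trans_lt ?_⟩
    have := Nat.mul_le_mul_left (k + 1) (Nat.succ_le_of_lt hlt)
    rw [Nat.mul_succ] at this
    simp only [distToInl]
    omega
  · have h₀ := distToInl_pathVertex w₀ E (by omega : (j : ℕ) ≤ k + 1)
    have h₂ := distToInl_pathVertex w₀ E (by omega : (j : ℕ) + 2 ≤ k + 1)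
    have h₁ : distToInl w₀ (inr (E, j)) = min (j + 1 + (k + 1) * H.dist w₀ (E : Sym2 W).inf)
        (k - j + (k + 1) * H.dist w₀ (E : Sym2 W).sup) := rfl
    by_cases h : (j : ℕ) + 1 + (k + 1) * H.dist w₀ (E : Sym2 W).inf ≤
        k - j + (k + 1) * H.dist w₀ (E : Sym2 W).sup
    · refine ⟨pathVertex E j, ?_, ?_⟩
      · simpa using (adj_pathVertex hk E (by omega : (j : ℕ) ≤ k)).symm
      · omega
    · refine ⟨pathVertex E (j + 2), ?_, ?_⟩
      · simpa using adj_pathVertex hk E (by omega : (j : ℕ) + 1 ≤ k)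
      · omega

theorem dist_inl (hc : H.Connected) (hk : 1 ≤ k) (w₀ : W) (x : W ⊕ (H.edgeSet × Fin k)) :
    (kSubdivision L k H).dist x (inl w₀) = distToInl w₀ x :=
  dist_eq_of_potential _ (distToInl_eq_zero_iff hc w₀) (fun _ _ => distToInl_le_of_adj hk w₀)
    (fun _ => exists_adj_distToInl_lt hc hk w₀) x

theorem adj_iff_dist_eq (hc : H.Connected) (hk : 1 ≤ k) (a b : W) :
    H.Adj a b ↔ (kSubdivision L k H).dist (inl a) (inl b) = k + 1 := by
  rw [dist_inl hc hk, distToInl, mul_eq_left₀ (by omega), dist_eq_one_iff_adj, adj_comm]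

theorem isLeft_iff_dvd_dist (hc : H.Connected) (hk : 1 ≤ k) (w₀ : W)
    (x : W ⊕ (H.edgeSet × Fin k)) :
    x.isLeft ↔ k + 1 ∣ (kSubdivision L k H).dist x (inl w₀) := by
  rw [dist_inl hc hk]
  rcases x with w | ⟨E, j⟩
  · simp [distToInl]
  · simp only [distToInl, isLeft_inr, Bool.false_eq_true, false_iff]
    have := j.2
    rcases min_choice (j + 1 + (k + 1) * H.dist w₀ (E : Sym2 W).inf)
      (k - j + (k + 1) * H.dist w₀ (E : Sym2 W).sup) with h | h <;>
      rw [h, Nat.dvd_add_left (dvd_mul_right _ _)] <;>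
      exact Nat.not_dvd_of_pos_of_lt (by omega) (by omega)

theorem not_isBranchVertex_inr (E : H.edgeSet) (j : Fin k) :
    ¬ (kSubdivision L k H).IsBranchVertex (inr (E, j)) := by
  refine not_isBranchVertex_of_adj (a := pathVertex E j) (b := pathVertex E (j + 2)) ?_
  rintro (w | ⟨E', j'⟩) h
  · obtain ⟨rfl, hj⟩ | ⟨rfl, hj⟩ := adj_inr_inl.mp h
    · left
      rw [hj, pathVertex_zero]
    · right
      rw [pathVertex_of_lt E (by omega)]
  · obtain ⟨rfl, hj | hj⟩ := adj_inr_inr.mp h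
    · right
      rw [pathVertex_eq_inr E j' (by omega)]
    · left
      rw [pathVertex_eq_inr E j' (by omega)]

theorem isBranchVertex_inl (hk : 1 ≤ k) {w : W} (hw : H.IsBranchVertex w) :
    (kSubdivision L k H).IsBranchVertex (inl w) := by
  obtain ⟨a, b, c, hab, hac, hbc, ha, hb, hc⟩ := hw.exists_adj
  obtain ⟨i, hi, -⟩ := exists_adj_inl_inr (E := ⟨s(w, a), ha⟩) hk w rfl
  obtain ⟨j, hj, -⟩ := exists_adj_inl_inr (E := ⟨s(w, b), hb⟩) hk w rfl
  obtain ⟨l, hl, -⟩ := exists_adj_inl_inr (E := ⟨s(w, c), hc⟩) hk w rfl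
  exact isBranchVertex_of_adj (by simp [Subtype.ext_iff, hab, ha.ne'])
    (by simp [Subtype.ext_iff, hac, ha.ne']) (by simp [Subtype.ext_iff, hbc, hb.ne']) hi hj hl

theorem map_inf_sup_cases (ψ : H ≃g H) (E : H.edgeSet) :
    (ψ (E : Sym2 W).inf = (ψ.mapEdgeSet E : Sym2 W).inf ∧
        ψ (E : Sym2 W).sup = (ψ.mapEdgeSet E : Sym2 W).sup) ∨
      (ψ (E : Sym2 W).inf = (ψ.mapEdgeSet E : Sym2 W).sup ∧
        ψ (E : Sym2 W).sup = (ψ.mapEdgeSet E : Sym2 W).inf) := by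
  refine Sym2.eq_iff.mp (Eq.trans ?_ (Sym2.mk_inf_sup _).symm)
  rw [← Sym2.map_mk, Sym2.mk_inf_sup]
  rfl

def PreservesOrientation (ψ : H ≃g H) (E : H.edgeSet) : Prop :=
  ψ (E : Sym2 W).inf = (ψ.mapEdgeSet E : Sym2 W).inf

instance (ψ : H ≃g H) (E : H.edgeSet) : Decidable (PreservesOrientation ψ E) :=
  inferInstanceAs (Decidable (_ = _))

def liftEquiv (ψ : H ≃g H) : W ⊕ (H.edgeSet × Fin k) ≃ W ⊕ (H.edgeSet × Fin k) :=
  ψ.toEquiv.sumCongr <| ψ.mapEdgeSet.prodShear fun E =>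
    if PreservesOrientation ψ E then Equiv.refl _ else Fin.revPerm

theorem liftEquiv_pathVertex (ψ : H ≃g H) (E : H.edgeSet) {i : ℕ} (hi : i ≤ k + 1) :
    liftEquiv (k := k) ψ (pathVertex E i) =
      pathVertex (ψ.mapEdgeSet E) (if PreservesOrientation ψ E then i else k + 1 - i) := by
  have hne := (adj_inf_sup (ψ.mapEdgeSet E)).ne
  by_cases ho : PreservesOrientation ψ E
  · have hsup : ψ (E : Sym2 W).sup = (ψ.mapEdgeSet E : Sym2 W).sup := by
      rcases map_inf_sup_cases ψ E with ⟨-, h⟩ | ⟨h, -⟩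
      · exact h
      · exact absurd (h.symm.trans ho) hne.symm
    have hinf : ψ (E : Sym2 W).inf = (ψ.mapEdgeSet E : Sym2 W).inf := ho
    rw [if_pos ho]
    unfold pathVertex
    split_ifs <;> simp [liftEquiv, ho, hinf, hsup]
  · obtain ⟨hinf, hsup⟩ : ψ (E : Sym2 W).inf = (ψ.mapEdgeSet E : Sym2 W).sup ∧
        ψ (E : Sym2 W).sup = (ψ.mapEdgeSet E : Sym2 W).inf :=
      (map_inf_sup_cases ψ E).resolve_left fun h => ho h.1
    rw [if_neg ho]
    unfold pathVertex
    split_ifs <;> simp [liftEquiv, ho, hinf, hsup, Fin.ext_iff] <;> omega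

theorem liftEquiv_pathVertex_pair (ψ : H ≃g H) (E : H.edgeSet) {i : ℕ} (hi : i ≤ k) :
    s(liftEquiv (k := k) ψ (pathVertex E i), liftEquiv ψ (pathVertex E (i + 1))) =
      s(pathVertex (ψ.mapEdgeSet E) (if PreservesOrientation ψ E then i else k - i),
        pathVertex (ψ.mapEdgeSet E) ((if PreservesOrientation ψ E then i else k - i) + 1)) := by
  rw [liftEquiv_pathVertex ψ E (by omega), liftEquiv_pathVertex ψ E (by omega)]
  split_ifs
  · rfl
  · rw [Sym2.eq_swap, show k + 1 - i = k - i + 1 by omega, show k + 1 - (i + 1) = k - i by omega]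

def liftIso (hk : 1 ≤ k) (ψ : H ≃g H) : kSubdivision L k H ≃g kSubdivision L k H where
  toEquiv := liftEquiv ψ
  map_rel_iff' {x y} := by
    simp only [adj_iff hk]
    constructor
    · rintro ⟨E', i, hi, h⟩
      obtain ⟨E, rfl⟩ := ψ.mapEdgeSet.surjective E'
      refine ⟨E, if PreservesOrientation ψ E then i else k - i, by split_ifs <;> omega, ?_⟩
      apply Sym2.map.injective (liftEquiv ψ).injective
      rw [Sym2.map_mk, Sym2.map_mk, h, liftEquiv_pathVertex_pair ψ E (by split_ifs <;> omega)]
      split_ifs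
      · rfl
      · rw [Nat.sub_sub_self hi]
    · rintro ⟨E, i, hi, h⟩
      refine ⟨ψ.mapEdgeSet E, if PreservesOrientation ψ E then i else k - i,
        by split_ifs <;> omega, ?_⟩
      rw [← liftEquiv_pathVertex_pair ψ E hi, ← Sym2.map_mk, ← Sym2.map_mk, h]

theorem hasFPFAut_of_iso (hk : 1 ≤ k) (ψ : H ≃g H) (hv : ∀ w, ψ w ≠ w)
    (he : ∀ e ∈ H.edgeSet, e.map ψ ≠ e) : HasFPFAut (kSubdivision L k H) := by
  refine ⟨liftIso hk ψ, ?_⟩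
  rintro (w | ⟨E, j⟩) h
  · exact hv w (Sum.inl_injective h)
  · exact he E E.2 (congrArg (fun p => (p.1 : Sym2 W)) (Sum.inr_injective h))

end kSubdivision

open kSubdivision in
theorem HasFPFAut.of_kSubdivision {W : Type} [L : LinearOrder W] {k : ℕ} {H : SimpleGraph W}
    (hc : H.Connected) (hk : 1 ≤ k) (hb : ∃ w, H.IsBranchVertex w)
    (h : HasFPFAut (kSubdivision L k H)) : HasFPFAut H := by
  obtain ⟨w, hw⟩ := hb
  refine h.of_isLeft_iff_dvd_dist (m := k + 1) ⟨_, isBranchVertex_inl hk hw⟩ ?_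
    (adj_iff_dist_eq hc hk)
  rintro (w₀ | ⟨E, j⟩) hb x
  · exact isLeft_iff_dvd_dist hc hk w₀ x
  · exact absurd hb (not_isBranchVertex_inr E j)

/-- for a connected finite simple graph `G` with at least 3 vertices and any
`k ≥ 1`, the `k`-subdivision of the bipartite construction of `G` admits a fixed point
free automorphism iff `G` does. -/
theorem kSubdivision_bipartite_fpfAut_iff {V : Type} [Fintype V] (G : SimpleGraph V)
    (hconn : G.Connected) (hV : 3 ≤ Fintype.card V) (k : ℕ) (hk : 1 ≤ k)
    (L : LinearOrder (V ⊕ (G.edgeSet × Bool))) :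
    HasFPFAut (kSubdivision L k (bipartiteConstruction G)) ↔ HasFPFAut G := by
  obtain ⟨x, y, z, hxy, hxz, hyz⟩ := Fintype.two_lt_card_iff.mp hV
  obtain ⟨v, a, b, hab, ha, hb⟩ := hconn.exists_adj_adj_ne hxy hxz hyz
  have hbranch : ∃ b, (bipartiteConstruction G).IsBranchVertex b :=
    ⟨inl v, bipartiteConstruction.isBranchVertex_inl ha hb hab⟩
  constructor
  · intro h
    exact (h.of_kSubdivision (bipartiteConstruction.connected hconn) hk hbranch
      ).of_bipartiteConstruction hconn hbranch
  · rintro ⟨φ, hφ⟩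
    exact kSubdivision.hasFPFAut_of_iso hk _ (bipartiteConstruction.swapIso_apply_ne hφ)
      fun _ he => bipartiteConstruction.swapIso_map_ne φ he
end

section
/- Let G be a finite simple graph and let P be a partition of V(G) into modules. Suppose σ is a permutation of the parts of P such that: (i) for all distinct parts A, B, the parts A and B are completely adjacent in G if and only if σ(A) and σ(B) are completely adjacent; (ii) for every part A with σ(A) ≠ A there is a graph isomorphism from the induced subgraph G[A] to G[σ(A)]; and (iii) for every part A with σ(A) = A the induced subgraph G[A] admits a fixed point free automorphism. Then G admits a fixed point free automorphism. -/
/-- A set `M` of vertices is a module if every vertex outside `M` is adjacent either to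
all vertices of `M` or to none of them. -/
def IsModule {V : Type} (G : SimpleGraph V) (M : Set V) : Prop :=
  ∀ u ∉ M, (∀ v ∈ M, G.Adj u v) ∨ (∀ v ∈ M, ¬ G.Adj u v)

/-- Two sets overlap if they intersect and neither contains the other. -/
def Overlaps {V : Type} (A B : Set V) : Prop :=
  (A ∩ B).Nonempty ∧ (A \ B).Nonempty ∧ (B \ A).Nonempty

/-- A module is strong if it overlaps no module of `G`. -/
def IsStrongModule {V : Type} (G : SimpleGraph V) (M : Set V) : Prop :=
  IsModule G M ∧ ∀ M', IsModule G M' → ¬ Overlaps M M'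
/-- Two vertex sets are completely adjacent if every vertex of the first is adjacent to
every vertex of the second. -/
def CompAdj {V : Type} (G : SimpleGraph V) (A B : Set V) : Prop :=
  ∀ a ∈ A, ∀ b ∈ B, G.Adj a b
/-- given a partition of the vertices of `G` into modules and a permutation
`σ` of the parts that preserves complete adjacency between distinct parts, such that
moved parts have isomorphic induced subgraphs and fixed parts admit fixed point free
automorphisms, the graph `G` admits a fixed point free automorphism. -/
theorem fpfAut_of_modular_partition {V : Type} [Fintype V] (G : SimpleGraph V)
    (P : Set (Set V)) (hpart : Setoid.IsPartition P)
    (hmod : ∀ A ∈ P, IsModule G A)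
    (σ : {A // A ∈ P} ≃ {A // A ∈ P})
    (hadj : ∀ A B : {A // A ∈ P}, A ≠ B →
      (CompAdj G A.1 B.1 ↔ CompAdj G (σ A).1 (σ B).1))
    (hiso : ∀ A : {A // A ∈ P}, σ A ≠ A →
      Nonempty (G.induce A.1 ≃g G.induce (σ A).1))
    (hfpf : ∀ A : {A // A ∈ P}, σ A = A →
      ∃ ψ : G.induce A.1 ≃g G.induce A.1, ∀ x, ψ x ≠ x) :
    ∃ φ : G ≃g G, ∀ x, φ x ≠ x := by
  classical
  obtain ⟨hne, hcov⟩ := hpart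
  have hcov' : ∀ x : V, ∃ A : {A // A ∈ P}, x ∈ A.1 ∧
      ∀ B : {A // A ∈ P}, x ∈ B.1 → B = A := by
    intro x
    obtain ⟨b, ⟨hbP, hxb⟩, hub⟩ := hcov x
    exact ⟨⟨b, hbP⟩, hxb, fun B hxB => Subtype.ext (hub B.1 ⟨B.2, hxB⟩)⟩
  choose pt hmem hu using hcov'
  have hdisj : ∀ (A B : {A // A ∈ P}), A ≠ B → ∀ z, z ∈ A.1 → z ∉ B.1 := by
    intro A B hAB z hA hB
    exact hAB ((hu z A hA).trans (hu z B hB).symm)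
  -- the per-part maps
  have hmap : ∀ A : {A // A ∈ P}, ∃ f : A.1 → (σ A).1,
      Function.Injective f ∧
      (∀ a b : A.1, G.Adj ↑a ↑b ↔ G.Adj ↑(f a) ↑(f b)) ∧
      (σ A = A → ∀ x : A.1, (↑(f x) : V) ≠ ↑x) := by
    intro A
    by_cases h : σ A = A
    · obtain ⟨ψ, hψ⟩ := hfpf A h
      refine ⟨fun a => ⟨↑(ψ a), by rw [h]; exact (ψ a).2⟩, ?_, ?_, ?_⟩
      · intro a b hab
        simp only [Subtype.mk.injEq] at hab
        exact ψ.injective (Subtype.ext hab)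
      · intro a b
        exact ψ.map_rel_iff.symm
      · intro _ x hx
        exact hψ x (Subtype.ext hx)
    · obtain ⟨e⟩ := hiso A h
      exact ⟨fun a => e a, fun a b hab => e.injective hab,
        fun a b => e.map_rel_iff.symm, fun hAA => absurd hAA h⟩
  choose f hinj hadjf hfpff using hmap
  have hcong : ∀ (A B : {A // A ∈ P}) (h : A = B) (x : V) (hxA : x ∈ A.1)
      (hxB : x ∈ B.1), (↑(f A ⟨x, hxA⟩) : V) = ↑(f B ⟨x, hxB⟩) := by
    rintro A B rfl x hxA hxB; rfl
  set F : V → V := fun x => ↑(f (pt x) ⟨x, hmem x⟩) with hF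
  have hFeq : ∀ x, F x = ↑(f (pt x) ⟨x, hmem x⟩) := fun _ => rfl
  have hFmem : ∀ x, F x ∈ (σ (pt x)).1 := fun x => (f (pt x) ⟨x, hmem x⟩).2
  have hptF : ∀ x, σ (pt x) = pt (F x) := fun x => hu (F x) _ (hFmem x)
  have hFinj : Function.Injective F := by
    intro x y hxy
    have h1 : σ (pt x) = σ (pt y) := by
      rw [hptF x, hptF y, hxy]
    have h2 : pt x = pt y := σ.injective h1
    have hy : y ∈ (pt x).1 := h2 ▸ hmem y
    have key : (↑(f (pt x) ⟨x, hmem x⟩) : V) = ↑(f (pt x) ⟨y, hy⟩) := by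
      rw [hFeq, hFeq] at hxy
      exact hxy.trans (hcong (pt y) (pt x) h2.symm y (hmem y) hy)
    have := hinj (pt x) (Subtype.ext key)
    exact congrArg Subtype.val this
  -- adjacency between distinct parts is complete adjacency
  have hadjiff : ∀ (A B : {A // A ∈ P}), A ≠ B → ∀ x ∈ A.1, ∀ y ∈ B.1,
      (G.Adj x y ↔ CompAdj G A.1 B.1) := by
    intro A B hAB x hx y hy
    constructor
    · intro hxy a ha b hb
      have hxB : x ∉ B.1 := hdisj A B hAB x hx
      have h1 : ∀ v ∈ B.1, G.Adj x v := by
        rcases hmod B.1 B.2 x hxB with h | h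
        · exact h
        · exact absurd hxy (h y hy)
      have hbA : b ∉ A.1 := hdisj B A (Ne.symm hAB) b hb
      rcases hmod A.1 A.2 b hbA with h | h
      · exact (h a ha).symm
      · exact absurd (h1 b hb).symm (h x hx)
    · intro h; exact h x hx y hy
  have hmapadj : ∀ x y : V, G.Adj (F x) (F y) ↔ G.Adj x y := by
    intro x y
    by_cases h : pt x = pt y
    · have hy : y ∈ (pt x).1 := h ▸ hmem y
      have hFy : F y = ↑(f (pt x) ⟨y, hy⟩) :=
        (hFeq y).trans (hcong (pt y) (pt x) h.symm y (hmem y) hy)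
      rw [hFeq x, hFy]
      exact (hadjf (pt x) ⟨x, hmem x⟩ ⟨y, hy⟩).symm
    · have hσ : σ (pt x) ≠ σ (pt y) := fun hh => h (σ.injective hh)
      have h1 : G.Adj (F x) (F y) ↔ CompAdj G (σ (pt x)).1 (σ (pt y)).1 :=
        hadjiff _ _ hσ (F x) (hFmem x) (F y) (hFmem y)
      have h2 : G.Adj x y ↔ CompAdj G (pt x).1 (pt y).1 :=
        hadjiff _ _ h x (hmem x) y (hmem y)
      rw [h1, h2, hadj (pt x) (pt y) h]
  have hFbij : Function.Bijective F := ⟨hFinj, Finite.surjective_of_injective hFinj⟩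
  refine ⟨⟨Equiv.ofBijective F hFbij, ?_⟩, ?_⟩
  · intro x y
    simpa using hmapadj x y
  · intro x
    show F x ≠ x
    by_cases h : σ (pt x) = pt x
    · rw [hFeq x]
      exact hfpff (pt x) h ⟨x, hmem x⟩
    · intro hx
      have hm := hFmem x
      rw [hx] at hm
      exact hdisj (pt x) (σ (pt x)) (Ne.symm h) x (hmem x) hm
end

section
/- Let G be a finite simple graph and let P be a partition of V(G) into modules. Suppose σ is a permutation of the parts of P with σ∘σ = id such that: (i) for all distinct parts A, B, the parts A and B are completely adjacent in G if and only if σ(A) and σ(B) are completely adjacent; (ii) for every part A with σ(A) ≠ A there is a graph isomorphism from the induced subgraph G[A] to G[σ(A)]; and (iii) for every part A with σ(A) = A the induced subgraph G[A] admits a fixed point free involution. Then G admits a fixed point free involution. -/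
/-- involutive version of the modular-partition combination lemma: if the
permutation `σ` of the parts is an involution, moved parts have isomorphic induced
subgraphs, and fixed parts admit fixed point free involutions, then `G` admits a fixed
point free involution. -/
theorem fpfInv_of_modular_partition {V : Type} [Fintype V] (G : SimpleGraph V)
    (P : Set (Set V)) (hpart : Setoid.IsPartition P)
    (hmod : ∀ A ∈ P, IsModule G A)
    (σ : {A // A ∈ P} ≃ {A // A ∈ P})
    (hσ2 : ∀ A, σ (σ A) = A)
    (hadj : ∀ A B : {A // A ∈ P}, A ≠ B →
      (CompAdj G A.1 B.1 ↔ CompAdj G (σ A).1 (σ B).1))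
    (hiso : ∀ A : {A // A ∈ P}, σ A ≠ A →
      Nonempty (G.induce A.1 ≃g G.induce (σ A).1))
    (hfpf : ∀ A : {A // A ∈ P}, σ A = A →
      ∃ ψ : G.induce A.1 ≃g G.induce A.1, (∀ x, ψ (ψ x) = x) ∧ ∀ x, ψ x ≠ x) :
    ∃ φ : G ≃g G, (∀ x, φ (φ x) = x) ∧ ∀ x, φ x ≠ x := by
  classical
  -- the part of a vertex
  have hex : ∀ v : V, ∃ A : {A // A ∈ P}, v ∈ A.1 := by
    intro v
    obtain ⟨B, ⟨hBP, hvB⟩, -⟩ := hpart.2 v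
    exact ⟨⟨B, hBP⟩, hvB⟩
  choose part hmem using hex
  have huniq : ∀ (v : V) (A : {A // A ∈ P}), v ∈ A.1 → A = part v := by
    intro v A hvA
    obtain ⟨B, -, hB⟩ := hpart.2 v
    exact Subtype.ext ((hB A.1 ⟨A.2, hvA⟩).trans (hB (part v).1 ⟨(part v).2, hmem v⟩).symm)
  have hdisj : ∀ (v : V) (A B : {A // A ∈ P}), v ∈ A.1 → v ∈ B.1 → A = B := by
    intro v A B hA hB; rw [huniq v A hA, huniq v B hB]
  -- setoid identifying A with σ A, and a choice of representative of each orbit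
  let s : Setoid {A // A ∈ P} := ⟨fun A B => B = A ∨ B = σ A, by
    constructor
    · exact fun A => Or.inl rfl
    · rintro A B (rfl | rfl)
      · exact Or.inl rfl
      · exact Or.inr (hσ2 A).symm
    · rintro A B C (rfl | rfl) (rfl | rfl)
      · exact Or.inl rfl
      · exact Or.inr rfl
      · exact Or.inr rfl
      · exact Or.inl (hσ2 A)⟩
  let rep : {A // A ∈ P} → {A // A ∈ P} := fun A => (Quotient.mk s A).out
  have hrep_r : ∀ A, A = rep A ∨ A = σ (rep A) := fun A =>
    Quotient.exact (Quotient.out_eq (Quotient.mk s A))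
  have hrep : ∀ A, rep A = A ∨ rep A = σ A := by
    intro A
    rcases hrep_r A with h | h
    · exact Or.inl h.symm
    · right
      have := congrArg σ h
      rw [hσ2] at this
      exact this.symm
  have hrepσ : ∀ A, rep (σ A) = rep A := by
    intro A
    have hq : Quotient.mk s (σ A) = Quotient.mk s A :=
      Quotient.sound (Or.inr (hσ2 A).symm)
    show (Quotient.mk s (σ A)).out = (Quotient.mk s A).out
    rw [hq]
  -- chosen isomorphisms for moved parts, involutions for fixed parts
  let g : ∀ A : {A // A ∈ P}, σ A ≠ A → (G.induce A.1 ≃g G.induce (σ A).1) :=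
    fun A h => (hiso A h).some
  choose ψ hψ1 hψ2 using hfpf
  -- the piecewise map
  let F : ∀ A : {A // A ∈ P}, A.1 → V := fun A x =>
    if h : σ A = A then (ψ A h x).1
    else if hr : rep A = A then (g A h x).1
    else ((g (σ A) (fun hc => h (((hσ2 A).symm.trans hc).symm))).symm
          ⟨x.1, by rw [hσ2 A]; exact x.2⟩).1
  have hF1 : ∀ (A) (h : σ A = A) (x : A.1), F A x = (ψ A h x).1 := by
    intro A h x
    simp only [F, dif_pos h]
  have hF2 : ∀ (A) (h : ¬ σ A = A) (hr : rep A = A) (x : A.1), F A x = (g A h x).1 := by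
    intro A h hr x
    simp only [F, dif_neg h, dif_pos hr]
  have hF3 : ∀ (A) (h : ¬ σ A = A) (hr : ¬ rep A = A) (h' : ¬ σ (σ A) = σ A) (x : A.1)
      (hx : x.1 ∈ (σ (σ A)).1),
      F A x = ((g (σ A) h').symm ⟨x.1, hx⟩).1 := by
    intro A h hr h' x hx
    simp only [F, dif_neg h, dif_neg hr]
  have hFmem : ∀ A (x : A.1), F A x ∈ (σ A).1 := by
    intro A x
    by_cases h : σ A = A
    · rw [hF1 A h x, h]
      exact (ψ A h x).2
    · by_cases hr : rep A = A
      · rw [hF2 A h hr x]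
        exact (g A h x).2
      · have h' : ¬ σ (σ A) = σ A := fun hc => h (((hσ2 A).symm.trans hc).symm)
        have hx : x.1 ∈ (σ (σ A)).1 := by rw [hσ2 A]; exact x.2
        rw [hF3 A h hr h' x hx]
        exact ((g (σ A) h').symm ⟨x.1, hx⟩).2
  have hFcongr : ∀ (A B : {A // A ∈ P}) (h : A = B) (x : V) (hx : x ∈ A.1)
      (hx' : x ∈ B.1), F A ⟨x, hx⟩ = F B ⟨x, hx'⟩ := by
    rintro A B rfl x hx hx'; rfl
  have hgcongr : ∀ (A B : {A // A ∈ P}) (h : A = B) (hA : σ A ≠ A) (hB : σ B ≠ B)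
      (x : V) (hx : x ∈ (σ A).1) (hx' : x ∈ (σ B).1),
      ((g A hA).symm ⟨x, hx⟩).1 = ((g B hB).symm ⟨x, hx'⟩).1 := by
    rintro A B rfl hA hB x hx hx'; rfl
  -- F is an involution across parts
  have hFinv : ∀ (A : {A // A ∈ P}) (x : A.1) (hx : F A x ∈ (σ A).1),
      F (σ A) ⟨F A x, hx⟩ = x.1 := by
    intro A x hx
    by_cases h : σ A = A
    · have hA : ((σ A).1 : Set V) = A.1 := congrArg _ h
      have hx' : F A x ∈ A.1 := hA ▸ hx
      rw [hFcongr (σ A) A h (F A x) hx hx']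
      have e : (⟨F A x, hx'⟩ : A.1) = ψ A h x := Subtype.ext (hF1 A h x)
      rw [hF1 A h ⟨F A x, hx'⟩, e, hψ1]
    · have h' : ¬ σ (σ A) = σ A := fun hc => h (((hσ2 A).symm.trans hc).symm)
      rcases hrep A with hr | hr
      · -- rep A = A : on A we used g A, on σ A we use (g (σ (σ A))).symm = (g A).symm
        have hrσ : ¬ rep (σ A) = σ A := by
          rw [hrepσ A, hr]
          exact fun hc => h hc.symm
        have hmem2 : F A x ∈ (σ (σ (σ A))).1 := by rw [hσ2 (σ A)]; exact hx
        rw [hF3 (σ A) h' hrσ (fun hc => h' (((hσ2 (σ A)).symm.trans hc).symm))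
          ⟨F A x, hx⟩ hmem2]
        have hmem3 : F A x ∈ (σ A).1 := hx
        rw [hgcongr (σ (σ A)) A (hσ2 A)
          (fun hc => h' (((hσ2 (σ A)).symm.trans hc).symm)) h (F A x) hmem2 hmem3]
        have e : (⟨F A x, hmem3⟩ : ((σ A).1 : Set V)) = g A h x :=
          Subtype.ext (hF2 A h hr x)
        rw [e, RelIso.symm_apply_apply]
      · -- rep A = σ A : on A we used (g (σ A)).symm, on σ A we use g (σ A)
        have hrA : ¬ rep A = A := by
          rw [hr]; exact fun hc => h hc
        have hrσ : rep (σ A) = σ A := by rw [hrepσ A, hr]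
        rw [hF2 (σ A) h' hrσ ⟨F A x, hx⟩]
        have hx0 : x.1 ∈ (σ (σ A)).1 := by rw [hσ2 A]; exact x.2
        have e : (⟨F A x, hx⟩ : ((σ A).1 : Set V)) =
            (g (σ A) h').symm ⟨x.1, hx0⟩ :=
          Subtype.ext (hF3 A h hrA h' x hx0)
        rw [e, RelIso.apply_symm_apply]
  -- F preserves adjacency within a part
  have hFadj : ∀ A (x y : A.1), G.Adj (F A x) (F A y) ↔ G.Adj x.1 y.1 := by
    intro A x y
    by_cases h : σ A = A
    · rw [hF1 A h x, hF1 A h y]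
      exact (ψ A h).map_adj_iff
    · by_cases hr : rep A = A
      · rw [hF2 A h hr x, hF2 A h hr y]
        exact (g A h).map_adj_iff
      · have h' : ¬ σ (σ A) = σ A := fun hc => h (((hσ2 A).symm.trans hc).symm)
        have hx : x.1 ∈ (σ (σ A)).1 := by rw [hσ2 A]; exact x.2
        have hy : y.1 ∈ (σ (σ A)).1 := by rw [hσ2 A]; exact y.2
        rw [hF3 A h hr h' x hx, hF3 A h hr h' y hy]
        exact ((g (σ A) h').symm).map_adj_iff
  -- F has no fixed point
  have hFne : ∀ A (x : A.1), F A x ≠ x.1 := by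
    intro A x hx
    by_cases h : σ A = A
    · rw [hF1 A h] at hx
      exact hψ2 A h x (Subtype.ext hx)
    · have hm := hFmem A x
      rw [hx] at hm
      exact h (hdisj x.1 (σ A) A hm x.2)
  -- adjacency between different parts is complete adjacency
  have hCA : ∀ (A B : {A // A ∈ P}), A ≠ B → ∀ x, x ∈ A.1 → ∀ y, y ∈ B.1 →
      (G.Adj x y ↔ CompAdj G A.1 B.1) := by
    intro A B hne x hx y hy
    constructor
    · intro hadjxy
      have hyA : y ∉ A.1 := fun hyA => hne (hdisj y A B hyA hy)
      have h1 : ∀ a ∈ A.1, G.Adj y a := by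
        rcases hmod A.1 A.2 y hyA with h | h
        · exact h
        · exact absurd hadjxy.symm (h x hx)
      intro a ha b hb
      have haB : a ∉ B.1 := fun haB => hne (hdisj a A B ha haB)
      rcases hmod B.1 B.2 a haB with h | h
      · exact h b hb
      · exact absurd (h1 a ha).symm (h y hy)
    · intro hca
      exact hca x hx y hy
  -- the global map
  let f : V → V := fun v => F (part v) ⟨v, hmem v⟩
  have hfmem : ∀ v, f v ∈ (σ (part v)).1 := fun v => hFmem _ _
  have hfpart : ∀ v, part (f v) = σ (part v) := fun v => (huniq _ _ (hfmem v)).symm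
  have hfinv : ∀ v, f (f v) = v := by
    intro v
    show F (part (f v)) ⟨f v, hmem (f v)⟩ = v
    rw [hFcongr (part (f v)) (σ (part v)) (hfpart v) (f v) (hmem (f v)) (hfmem v)]
    exact hFinv (part v) ⟨v, hmem v⟩ (hfmem v)
  have hfne : ∀ v, f v ≠ v := fun v h => hFne (part v) ⟨v, hmem v⟩ h
  have hfadj : ∀ u v, G.Adj (f u) (f v) ↔ G.Adj u v := by
    intro u v
    by_cases hAB : part u = part v
    · have h2 : v ∈ (part u).1 := by rw [hAB]; exact hmem v
      have e : f v = F (part u) ⟨v, h2⟩ := hFcongr (part v) (part u) hAB.symm v (hmem v) h2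
      rw [show f u = F (part u) ⟨u, hmem u⟩ from rfl, e]
      exact hFadj (part u) ⟨u, hmem u⟩ ⟨v, h2⟩
    · have hσne : σ (part u) ≠ σ (part v) := fun h => hAB (σ.injective h)
      rw [hCA _ _ hσne (f u) (hfmem u) (f v) (hfmem v),
          hCA _ _ hAB u (hmem u) v (hmem v)]
      exact (hadj (part u) (part v) hAB).symm
  have hinvol : Function.Involutive f := hfinv
  exact ⟨⟨Function.Involutive.toPerm f hinvol, @fun a b => hfadj a b⟩,
    fun x => hfinv x, fun x => hfne x⟩
end

section
/- Let V be a finite set, c : V → C a coloring of V, and b : V → Bool. Then there exists a permutation φ of V satisfying c(φ(v)) = c(v) for all v and such that φ(v) = v implies b(v) = true, if and only if b(v) = true for every v whose color class {w ∈ V : c(w) = c(v)} equals {v}. -/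
lemma exists_derangement_of_nontrivial (α : Type*) [Finite α] [Nontrivial α] :
    ∃ σ : Equiv.Perm α, ∀ a, σ a ≠ a := by
  cases nonempty_fintype α
  obtain ⟨m, hm⟩ : ∃ m, Fintype.card α = m + 2 := by
    have := Fintype.one_lt_card (α := α)
    exact ⟨Fintype.card α - 2, by omega⟩
  let e : α ≃ Fin (m + 2) := Fintype.equivFinOfCardEq hm
  refine ⟨e.trans ((finRotate (m + 2)).trans e.symm), fun a h => ?_⟩
  have h2 : finRotate (m + 2) (e a) = e a := by
    have := congrArg e h
    simpa using this
  rw [finRotate_succ_apply] at h2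
  have : (1 : Fin (m + 2)) = 0 := by
    have := add_right_cancel (a := (1 : Fin (m+2))) (b := e a) (c := (0 : Fin (m+2)))
      (by simpa [add_comm] using h2)
    simpa using this
  exact one_ne_zero this

/-- for a finite set `V` with coloring `c` and boolean function `b`, a
color-preserving permutation whose fixed points are all allowed by `b` exists iff every
element whose color class is a singleton is allowed to be fixed. -/
theorem colorPreserving_pfpf_perm_iff {V C : Type} [Fintype V]
    (c : V → C) (b : V → Bool) :
    (∃ φ : Equiv.Perm V, (∀ v, c (φ v) = c v) ∧ ∀ v, φ v = v → b v = true) ↔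
    (∀ v : V, {w : V | c w = c v} = {v} → b v = true) := by
  classical
  constructor
  · rintro ⟨φ, hc, hb⟩ v hv
    apply hb
    have : φ v ∈ ({v} : Set V) := by rw [← hv]; exact hc v
    exact this
  · intro H
    -- fiber permutations
    let σ : ∀ k : C, Equiv.Perm {v // c v = k} := fun k =>
      if h : Nontrivial {v // c v = k} then
        (exists_derangement_of_nontrivial {v // c v = k}).choose
      else Equiv.refl _
    refine ⟨(Equiv.sigmaFiberEquiv c).symm.trans
      ((Equiv.sigmaCongrRight σ).trans (Equiv.sigmaFiberEquiv c)), ?_, ?_⟩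
    · intro v
      exact (σ (c v) ⟨v, rfl⟩).2
    · intro v hv
      simp only [Equiv.trans_apply, Equiv.sigmaFiberEquiv, Equiv.sigmaCongrRight,
        Equiv.coe_fn_symm_mk, Equiv.coe_fn_mk] at hv
      by_cases h : Nontrivial {w // c w = c v}
      · exfalso
        have hfix : σ (c v) ⟨v, rfl⟩ = ⟨v, rfl⟩ := Subtype.ext hv
        have := (exists_derangement_of_nontrivial {w // c w = c v}).choose_spec ⟨v, rfl⟩
        rw [show σ (c v) = (exists_derangement_of_nontrivial {w // c w = c v}).choose
          from dif_pos h] at hfix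
        exact this hfix
      · apply H
        have hsub : Subsingleton {w // c w = c v} := not_nontrivial_iff_subsingleton.mp h
        ext w
        simp only [Set.mem_setOf_eq, Set.mem_singleton_iff]
        constructor
        · intro hw
          have : (⟨w, hw⟩ : {w // c w = c v}) = ⟨v, rfl⟩ := hsub.elim _ _
          exact congrArg Subtype.val this
        · rintro rfl; rfl
end

section
/- Let G be a finite simple graph on n vertices. Then G admits a fixed point free involution if and only if G admits an equitable partition of its vertex set into n/2 cells, each of size 2. -/
open Classical in
lemma ncard_pair_filter {V : Type} {b b' : V} (h : b ≠ b') (p : V → Prop) :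
    {x ∈ ({b, b'} : Set V) | p x}.ncard
      = (if p b then 1 else 0) + (if p b' then 1 else 0) := by
  by_cases hb : p b <;> by_cases hb' : p b' <;>
    simp only [if_pos, if_neg, hb, hb', if_true, if_false]
  · have : {x ∈ ({b, b'} : Set V) | p x} = {b, b'} := by
      ext x; constructor
      · rintro ⟨hx, -⟩; exact hx
      · rintro (rfl | rfl) <;> exact ⟨by simp, by assumption⟩
    rw [this, Set.ncard_pair h]
  · have : {x ∈ ({b, b'} : Set V) | p x} = {b} := by
      ext x; constructor
      · rintro ⟨(rfl | rfl), hx⟩; · rfl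
        · exact absurd hx hb'
      · rintro rfl; exact ⟨by simp, hb⟩
    rw [this, Set.ncard_singleton]
  · have : {x ∈ ({b, b'} : Set V) | p x} = {b'} := by
      ext x; constructor
      · rintro ⟨(rfl | rfl), hx⟩; · exact absurd hx hb
        · rfl
      · rintro rfl; exact ⟨by simp, hb'⟩
    rw [this, Set.ncard_singleton]
  · have : {x ∈ ({b, b'} : Set V) | p x} = ∅ := by
      ext x; constructor
      · rintro ⟨(rfl | rfl), hx⟩
        · exact absurd hx hb
        · exact absurd hx hb'
      · rintro ⟨⟩
    rw [this, Set.ncard_empty]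

private theorem fpf_fwd {V : Type} [Fintype V] (G : SimpleGraph V)
    (φ : G ≃g G) (hinv : ∀ v, φ (φ v) = v) (hfpf : ∀ v, φ v ≠ v) :
    (∃ P : Set (Set V), Setoid.IsPartition P ∧
      P.ncard = Fintype.card V / 2 ∧
      (∀ A ∈ P, A.ncard = 2) ∧
      (∀ A ∈ P, ∀ B ∈ P, ∀ a ∈ A, ∀ a' ∈ A,
        {x ∈ B | G.Adj a x}.ncard = {x ∈ B | G.Adj a' x}.ncard)) := by
  classical
  set g : V → Set V := fun v => ({v, φ v} : Set V) with hg
  have hcell : ∀ v w, v ∈ g w → g w = g v := by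
    intro v w hv
    rcases hv with rfl | rfl
    · rfl
    · show ({w, φ w} : Set V) = {φ w, φ (φ w)}
      rw [hinv w, Set.pair_comm]
  refine ⟨Set.range g, ⟨?_, ?_⟩, ?_, ?_, ?_⟩
  · rintro ⟨v, hv⟩
    have : v ∈ (∅ : Set V) := hv ▸ Set.mem_insert v _
    exact this
  · intro v
    refine ⟨g v, ⟨⟨v, rfl⟩, Set.mem_insert v _⟩, ?_⟩
    rintro B ⟨⟨w, rfl⟩, hvB⟩
    exact hcell v w hvB
  · -- cardinality
    have himg : Set.range g = ↑(Finset.univ.image g) := by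
      ext A; simp
    have hfib : ∀ A ∈ Finset.univ.image g,
        (Finset.univ.filter fun w => g w = A).card = 2 := by
      intro A hA
      rcases Finset.mem_image.1 hA with ⟨v, -, rfl⟩
      have : (Finset.univ.filter fun w => g w = g v) = {v, φ v} := by
        ext w
        simp only [Finset.mem_filter, Finset.mem_univ, true_and, Finset.mem_insert,
          Finset.mem_singleton]
        constructor
        · intro hw
          have : w ∈ g v := hw ▸ Set.mem_insert w _
          exact this
        · rintro (rfl | rfl)
          · rfl
          · exact (hcell (φ v) v (Set.mem_insert_of_mem _ rfl)).symm
      rw [this, Finset.card_insert_of_notMem (by simpa using fun h => hfpf v h.symm),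
        Finset.card_singleton]
    have hsum : Fintype.card V = 2 * (Finset.univ.image g).card := by
      rw [← Finset.card_univ, Finset.card_eq_sum_card_image g Finset.univ]
      rw [Finset.sum_congr rfl hfib, Finset.sum_const, smul_eq_mul, mul_comm]
    rw [himg, Set.ncard_coe_finset, hsum]
    omega
  · rintro A ⟨v, rfl⟩
    exact Set.ncard_pair (fun h => hfpf v h.symm)
  · -- equitable
    have key : ∀ v w, {x ∈ g w | G.Adj v x}.ncard = {x ∈ g w | G.Adj (φ v) x}.ncard := by
      intro v w
      have himage : (fun x => φ x) '' {x ∈ g w | G.Adj v x} = {x ∈ g w | G.Adj (φ v) x} := by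
        ext x
        constructor
        · rintro ⟨y, ⟨hyB, hyA⟩, rfl⟩
          refine ⟨?_, φ.map_adj_iff.2 hyA⟩
          rcases hyB with rfl | rfl
          · exact Set.mem_insert_of_mem _ rfl
          · show φ (φ w) ∈ g w
            rw [hinv w]; exact Set.mem_insert w _
        · rintro ⟨hxB, hxA⟩
          refine ⟨φ x, ⟨?_, ?_⟩, hinv x⟩
          · rcases hxB with rfl | rfl
            · exact Set.mem_insert_of_mem _ rfl
            · rw [hinv w]; exact Set.mem_insert w _
          · exact φ.map_adj_iff.1 (by rw [hinv x]; exact hxA)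
      rw [← himage, Set.ncard_image_of_injective _ φ.injective]
    rintro A ⟨v, rfl⟩ B ⟨w, rfl⟩ a ha a' ha'
    have hval : ∀ b ∈ g v, {x ∈ g w | G.Adj b x}.ncard = {x ∈ g w | G.Adj v x}.ncard := by
      rintro b (rfl | rfl)
      · rfl
      · exact (key v w).symm
    rw [hval a ha, hval a' ha']

private theorem fpf_bwd {V : Type} [Fintype V] (G : SimpleGraph V)
    (P : Set (Set V)) (hpart : Setoid.IsPartition P)
    (hsize : ∀ A ∈ P, A.ncard = 2)
    (heq : ∀ A ∈ P, ∀ B ∈ P, ∀ a ∈ A, ∀ a' ∈ A,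
        {x ∈ B | G.Adj a x}.ncard = {x ∈ B | G.Adj a' x}.ncard) :
    (∃ φ : G ≃g G, (∀ v, φ (φ v) = v) ∧ ∀ v, φ v ≠ v) := by
  classical
  -- the cell of each vertex
  have hcell : ∀ v : V, ∃ A, (A ∈ P ∧ v ∈ A) ∧ ∀ B, B ∈ P ∧ v ∈ B → B = A :=
    fun v => hpart.2 v
  choose C hC hCuniq using hcell
  have hCP : ∀ v, C v ∈ P := fun v => (hC v).1
  have hvC : ∀ v, v ∈ C v := fun v => (hC v).2
  -- the other element of the cell
  have hother : ∀ v : V, ∃ w, (w ∈ C v ∧ w ≠ v) ∧ ∀ u, u ∈ C v ∧ u ≠ v → u = w := by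
    intro v
    rcases Set.ncard_eq_two.1 (hsize (C v) (hCP v)) with ⟨a, b, hab, hCv⟩
    rcases (hCv ▸ hvC v : v ∈ ({a, b} : Set V)) with rfl | rfl
    · refine ⟨b, ⟨hCv ▸ Set.mem_insert_of_mem _ rfl, fun h => hab h.symm⟩, ?_⟩
      rintro u ⟨hu, hune⟩
      rcases (hCv ▸ hu : u ∈ ({v, b} : Set V)) with rfl | rfl
      · exact absurd rfl hune
      · rfl
    · refine ⟨a, ⟨hCv ▸ Set.mem_insert _ _, hab⟩, ?_⟩
      rintro u ⟨hu, hune⟩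
      rcases (hCv ▸ hu : u ∈ ({a, v} : Set V)) with rfl | rfl
      · rfl
      · exact absurd rfl hune
  choose f hf hfuniq using hother
  have hfC : ∀ v, f v ∈ C v := fun v => (hf v).1
  have hfne : ∀ v, f v ≠ v := fun v => (hf v).2
  have hCf : ∀ v, C (f v) = C v := fun v => (hCuniq (f v) (C v) ⟨hCP v, hfC v⟩).symm
  have hff : ∀ v, f (f v) = v := by
    intro v
    have := hfuniq (f v) v ⟨(hCf v).symm ▸ hvC v, fun h => hfne v h.symm⟩
    exact this.symm
  have hCv_eq : ∀ v, C v = {v, f v} := by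
    intro v
    rcases Set.ncard_eq_two.1 (hsize (C v) (hCP v)) with ⟨a, b, hab, hCv⟩
    rcases (hCv ▸ hvC v : v ∈ ({a, b} : Set V)) with rfl | rfl
    · have : f v = b := by
        rcases (hCv ▸ hfC v : f v ∈ ({v, b} : Set V)) with h | h
        · exact absurd h (hfne v)
        · exact h
      rw [hCv, this]
    · have : f v = a := by
        rcases (hCv ▸ hfC v : f v ∈ ({a, v} : Set V)) with h | h
        · exact h
        · exact absurd h (hfne v)
      rw [hCv, this, Set.pair_comm]
  -- adjacency is preserved
  have hadj : ∀ a b, G.Adj a b → G.Adj (f a) (f b) := by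
    intro a b hab
    by_cases hAB : C a = C b
    · -- b is the other element of a's cell
      have hba : f a = b := (hfuniq a b ⟨hAB ▸ hvC b, (G.ne_of_adj hab).symm⟩).symm
      have hba' : f b = a := (hfuniq b a ⟨hAB ▸ hvC a, G.ne_of_adj hab⟩).symm
      rw [hba, hba']
      exact hab.symm
    · have hne_b : b ≠ f b := fun h => hfne b h.symm
      have hne_a : a ≠ f a := fun h => hfne a h.symm
      have e1 := heq (C a) (hCP a) (C b) (hCP b) a (hvC a) (f a) (hfC a)
      have e2 := heq (C b) (hCP b) (C a) (hCP a) b (hvC b) (f b) (hfC b)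
      rw [hCv_eq b, ncard_pair_filter hne_b (G.Adj a), ncard_pair_filter hne_b (G.Adj (f a))] at e1
      rw [hCv_eq a, ncard_pair_filter hne_a (G.Adj b), ncard_pair_filter hne_a (G.Adj (f b))] at e2
      have hp : G.Adj a b := hab
      have hp' : G.Adj b a := hab.symm
      by_cases hq : G.Adj a (f b) <;> by_cases hr : G.Adj (f a) b <;>
        by_cases hs : G.Adj (f a) (f b)
      all_goals
        first
        | assumption
        | (exfalso
           have hq' : G.Adj (f b) a ↔ G.Adj a (f b) := ⟨SimpleGraph.Adj.symm, SimpleGraph.Adj.symm⟩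
           have hr' : G.Adj b (f a) ↔ G.Adj (f a) b := ⟨SimpleGraph.Adj.symm, SimpleGraph.Adj.symm⟩
           have hs' : G.Adj (f b) (f a) ↔ G.Adj (f a) (f b) := ⟨SimpleGraph.Adj.symm, SimpleGraph.Adj.symm⟩
           simp only [hp, hp', hq' , hr', hs', hq, hr, hs, if_true, if_false,
             if_pos, if_neg, not_false_iff] at e1 e2
           omega)
  have hadj_iff : ∀ a b, G.Adj (f a) (f b) ↔ G.Adj a b := by
    intro a b
    constructor
    · intro h
      have := hadj _ _ h
      rwa [hff, hff] at this
    · exact hadj a b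
  refine ⟨⟨Function.Involutive.toPerm f hff, ?_⟩, hff, hfne⟩
  intro a b
  exact hadj_iff a b

/-- a finite simple graph on `n` vertices admits a fixed point free
involution iff it admits an equitable partition of its vertex set into `n / 2` cells,
each of size `2`. -/
theorem fpfInv_iff_equitable_partition {V : Type} [Fintype V] (G : SimpleGraph V) :
    (∃ φ : G ≃g G, (∀ v, φ (φ v) = v) ∧ ∀ v, φ v ≠ v) ↔
    (∃ P : Set (Set V), Setoid.IsPartition P ∧
      P.ncard = Fintype.card V / 2 ∧
      (∀ A ∈ P, A.ncard = 2) ∧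
      (∀ A ∈ P, ∀ B ∈ P, ∀ a ∈ A, ∀ a' ∈ A,
        {x ∈ B | G.Adj a x}.ncard = {x ∈ B | G.Adj a' x}.ncard)) := by
  constructor
  · rintro ⟨φ, hinv, hfpf⟩
    exact fpf_fwd G φ hinv hfpf
  · rintro ⟨P, hpart, -, hsize, heq⟩
    exact fpf_bwd G P hpart hsize heq
end

section
/- Let G be a finite simple graph with real adjacency matrix A. Suppose G is compact, i.e., every doubly stochastic real matrix X with AX = XA lies in the convex hull of the permutation matrices of automorphisms of G. If there exists a doubly stochastic real matrix X with AX = XA and all diagonal entries of X equal to zero, then G admits a fixed point free automorphism. -/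
/-- A real square matrix is doubly stochastic if its entries are nonnegative and all row
and column sums equal `1`. -/
def IsDoublyStochastic {V : Type} [Fintype V] (X : Matrix V V ℝ) : Prop :=
  (∀ i j, 0 ≤ X i j) ∧ (∀ i, ∑ j, X i j = 1) ∧ (∀ j, ∑ i, X i j = 1)

/-- if `G` is compact (every doubly stochastic matrix commuting with its
adjacency matrix lies in the convex hull of the permutation matrices of automorphisms of
`G`) and some doubly stochastic matrix commuting with the adjacency matrix has zero
diagonal, then `G` has a fixed point free automorphism. -/
theorem compact_fpfAut {V : Type} [Fintype V] [DecidableEq V]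
    (G : SimpleGraph V) [DecidableRel G.Adj]
    (hcompact : ∀ X : Matrix V V ℝ, IsDoublyStochastic X →
      G.adjMatrix ℝ * X = X * G.adjMatrix ℝ →
      X ∈ convexHull ℝ {P : Matrix V V ℝ |
        ∃ σ : G ≃g G, P = fun u v => if u = σ v then (1 : ℝ) else 0})
    (X : Matrix V V ℝ) (hds : IsDoublyStochastic X)
    (hcomm : G.adjMatrix ℝ * X = X * G.adjMatrix ℝ)
    (hdiag : ∀ v, X v v = 0) :
    ∃ φ : G ≃g G, ∀ v, φ v ≠ v := by
  by_contra h
  push_neg at h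
  have hX := hcompact X hds hcomm
  rw [convexHull_eq] at hX
  obtain ⟨ι, t, w, z, hw0, hw1, hz, hcm⟩ := hX
  -- trace of X is zero
  have htrX : Matrix.trace X = 0 := by
    simp [Matrix.trace, Matrix.diag, hdiag]
  -- each z i has trace ≥ 1
  have htrz : ∀ i ∈ t, (1 : ℝ) ≤ Matrix.trace (z i) := by
    intro i hi
    obtain ⟨σ, hσ⟩ := hz i hi
    obtain ⟨v, hv⟩ := h σ
    have : Matrix.trace (z i) = ∑ u : V, if u = σ u then (1 : ℝ) else 0 := by
      simp [hσ, Matrix.trace, Matrix.diag]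
    rw [this]
    have hle : (if v = σ v then (1 : ℝ) else 0) ≤ ∑ u : V, if u = σ u then (1 : ℝ) else 0 := by
      apply Finset.single_le_sum (fun u _ => by positivity) (Finset.mem_univ v)
    rwa [if_pos hv.symm] at hle
  -- compute trace of center mass
  have hcm' : X = ∑ i ∈ t, w i • z i := by
    rw [← hcm, Finset.centerMass, hw1, inv_one, one_smul]
  have : (1 : ℝ) ≤ Matrix.trace X := by
    rw [hcm', Matrix.trace_sum]
    calc (1 : ℝ) = ∑ i ∈ t, w i := hw1.symm
    _ ≤ ∑ i ∈ t, Matrix.trace (w i • z i) := by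
        apply Finset.sum_le_sum
        intro i hi
        rw [Matrix.trace_smul, smul_eq_mul]
        calc w i = w i * 1 := (mul_one _).symm
        _ ≤ w i * Matrix.trace (z i) :=
            mul_le_mul_of_nonneg_left (htrz i hi) (hw0 i hi)
  linarith [this, htrX]
end

section
/- Let G = (V,E) be a finite simple graph with |V| ≥ 4, and let G' be the split construction of G. Then G admits a fixed point free involution if and only if G' admits a fixed point free involution. -/
/-- A graph has a fixed point free involution if some automorphism of order dividing two
maps no vertex to itself. -/
def HasFPFInv {W : Type} (H : SimpleGraph W) : Prop :=
  ∃ φ : H ≃g H, (∀ v, φ (φ v) = v) ∧ ∀ v, φ v ≠ v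
lemma adj_ll {V : Type} (G : SimpleGraph V) (u v : V) :
    (splitConstruction G).Adj (Sum.inl u) (Sum.inl v) ↔ u ≠ v := by
  simp [splitConstruction, SimpleGraph.fromRel_adj]

lemma adj_lr {V : Type} (G : SimpleGraph V) (u : V) (e : G.edgeSet) (i : Bool) :
    (splitConstruction G).Adj (Sum.inl u) (Sum.inr (e, i)) ↔ u ∈ (e : Sym2 V) := by
  simp only [splitConstruction, SimpleGraph.fromRel_adj]
  constructor
  · rintro ⟨-, (⟨u', v', h, h'⟩ | ⟨u', e', i', h1, h2, h3⟩) | (⟨u', v', h, h'⟩ | ⟨u', e', i', h1, h2, h3⟩)⟩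
    · exact absurd h' (by simp)
    · cases h1; cases h2; exact h3
    · exact absurd h (by simp)
    · exact absurd h1 (by simp)
  · intro hu
    exact ⟨by simp, Or.inl (Or.inr ⟨u, e, i, rfl, rfl, hu⟩)⟩

lemma adj_rr {V : Type} (G : SimpleGraph V) (p q : G.edgeSet × Bool) :
    ¬ (splitConstruction G).Adj (Sum.inr p) (Sum.inr q) := by
  simp [splitConstruction, SimpleGraph.fromRel_adj]

/-- for a finite simple graph `G` with at least 4 vertices, `G` admits a
fixed point free involution iff its split construction does. -/
theorem split_fpfInv_iff {V : Type} [Fintype V] (G : SimpleGraph V)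
    (hV : 4 ≤ Fintype.card V) :
    HasFPFInv G ↔ HasFPFInv (splitConstruction G) := by
  constructor
  · rintro ⟨φ, hinv, hfpf⟩
    have hinj : Function.Injective (⇑φ : V → V) := fun a b h' => by
      have := congrArg (⇑φ) h'
      rwa [hinv, hinv] at this
    have hmem : ∀ (u : V) (z : Sym2 V), φ u ∈ Sym2.map (φ : V → V) z ↔ u ∈ z := by
      intro u z
      rw [Sym2.mem_map]
      constructor
      · rintro ⟨a, ha, hau⟩
        rwa [← hinj hau]
      · intro h; exact ⟨u, h, rfl⟩
    set f : (V ⊕ (G.edgeSet × Bool)) → (V ⊕ (G.edgeSet × Bool)) :=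
      Sum.map (φ : V → V) (fun p => (φ.mapEdgeSet p.1, !p.2)) with hf
    have hcoe : ∀ e : G.edgeSet, (↑(φ.mapEdgeSet e) : Sym2 V) = Sym2.map (φ : V → V) ↑e := by
      intro e; rfl
    have hEinv : ∀ e : G.edgeSet, φ.mapEdgeSet (φ.mapEdgeSet e) = e := by
      intro e
      apply Subtype.ext
      rw [hcoe, hcoe, Sym2.map_map]
      have : ((φ : V → V) ∘ (φ : V → V)) = id := funext fun a => hinv a
      rw [this, Sym2.map_id]
      rfl
    have hfinv : Function.Involutive f := by
      rintro (u | ⟨e, i⟩)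
      · simp [hf, hinv u]
      · rw [show f (Sum.inr (e, i)) = Sum.inr (φ.mapEdgeSet e, !i) from rfl,
          show f (Sum.inr (φ.mapEdgeSet e, !i))
            = Sum.inr (φ.mapEdgeSet (φ.mapEdgeSet e), !(!i)) from rfl,
          hEinv e, Bool.not_not]
    refine ⟨⟨hfinv.toPerm, ?_⟩, fun v => hfinv v, ?_⟩
    · rintro (u | ⟨e, i⟩) (v | ⟨e', i'⟩)
      · show (splitConstruction G).Adj (Sum.inl (φ u)) (Sum.inl (φ v)) ↔ _
        rw [adj_ll, adj_ll, hinj.ne_iff]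
      · show (splitConstruction G).Adj (Sum.inl (φ u)) (Sum.inr (φ.mapEdgeSet e', !i')) ↔ _
        rw [adj_lr, adj_lr, hcoe, hmem]
      · show (splitConstruction G).Adj (Sum.inr (φ.mapEdgeSet e, !i)) (Sum.inl (φ v)) ↔ _
        rw [SimpleGraph.adj_comm, SimpleGraph.adj_comm _ _ (Sum.inl v)]
        rw [adj_lr, adj_lr, hcoe, hmem]
      · constructor
        · intro h; exact absurd h (adj_rr _ _ _)
        · intro h; exact absurd h (adj_rr _ _ _)
    · rintro (u | ⟨e, i⟩)
      · simp only [hf]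
        exact fun h => hfpf u (by simpa using h)
      · simp [hf]
  · rintro ⟨ψ, hinv, hfpf⟩
    classical
    -- P x : x has three distinct neighbors
    set P : (V ⊕ (G.edgeSet × Bool)) → Prop := fun x =>
      ∃ a b c, a ≠ b ∧ a ≠ c ∧ b ≠ c ∧ (splitConstruction G).Adj x a ∧
        (splitConstruction G).Adj x b ∧ (splitConstruction G).Adj x c with hP
    have hPl : ∀ u : V, P (Sum.inl u) := by
      intro u
      have hcard : 2 < (Finset.univ.erase u).card := by
        rw [Finset.card_erase_of_mem (Finset.mem_univ u), Finset.card_univ]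
        omega
      obtain ⟨a, b, c, ha, hb, hc, hab, hac, hbc⟩ := Finset.two_lt_card_iff.mp hcard
      refine ⟨Sum.inl a, Sum.inl b, Sum.inl c, by simp [hab], by simp [hac], by simp [hbc],
        ?_, ?_, ?_⟩ <;> rw [adj_ll]
      · exact (Finset.ne_of_mem_erase ha).symm
      · exact (Finset.ne_of_mem_erase hb).symm
      · exact (Finset.ne_of_mem_erase hc).symm
    have hPr : ∀ p : G.edgeSet × Bool, ¬ P (Sum.inr p) := by
      rintro ⟨e, i⟩ ⟨a, b, c, hab, hac, hbc, ha, hb, hc⟩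
      have hex : ∃ x y, (e : Sym2 V) = s(x, y) :=
        Sym2.ind (f := fun z => ∃ x y, z = s(x, y)) (fun x y => ⟨x, y, rfl⟩) (e : Sym2 V)
      obtain ⟨x, y, hxy⟩ := hex
      have key : ∀ w, (splitConstruction G).Adj (Sum.inr (e, i)) w → w = Sum.inl x ∨ w = Sum.inl y := by
        rintro (w | q) h
        · have := (adj_lr G w e i).mp h.symm
          rw [hxy, Sym2.mem_iff] at this
          rcases this with rfl | rfl
          · exact Or.inl rfl
          · exact Or.inr rfl
        · exact absurd h (adj_rr _ _ _)
      rcases key a ha with rfl | rfl <;> rcases key b hb with rfl | rfl <;>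
        rcases key c hc with rfl | rfl <;>
        first | exact hab rfl | exact hac rfl | exact hbc rfl
    have hψl : ∀ u : V, ∃ w : V, ψ (Sum.inl u) = Sum.inl w := by
      intro u
      rcases h : ψ (Sum.inl u) with w | p
      · exact ⟨w, rfl⟩
      · exfalso
        obtain ⟨a, b, c, hab, hac, hbc, ha, hb, hc⟩ := hPl u
        refine hPr p ⟨ψ a, ψ b, ψ c, ?_, ?_, ?_, ?_, ?_, ?_⟩
        · exact fun h' => hab (ψ.toEquiv.injective h')
        · exact fun h' => hac (ψ.toEquiv.injective h')
        · exact fun h' => hbc (ψ.toEquiv.injective h')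
        · rw [← h]; exact ψ.map_adj_iff.mpr ha
        · rw [← h]; exact ψ.map_adj_iff.mpr hb
        · rw [← h]; exact ψ.map_adj_iff.mpr hc
    choose g hg using hψl
    have hginv : ∀ u, g (g u) = u := by
      intro u
      have : (Sum.inl (g (g u)) : V ⊕ (G.edgeSet × Bool)) = Sum.inl u := by
        rw [← hg, ← hg, hinv]
      exact Sum.inl.inj this
    have hginj : Function.Injective g := Function.Involutive.injective hginv
    have hψr : ∀ p : G.edgeSet × Bool, ∃ q, ψ (Sum.inr p) = Sum.inr q := by
      intro p
      rcases h : ψ (Sum.inr p) with w | q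
      · exfalso
        have : ψ (Sum.inl w) = Sum.inr p := by rw [← h, hinv]
        rw [hg w] at this
        exact Sum.inl_ne_inr this
      · exact ⟨q, rfl⟩
    have key : ∀ u v, G.Adj u v → G.Adj (g u) (g v) := by
      intro u v h
      set e : G.edgeSet := ⟨s(u, v), G.mem_edgeSet.mpr h⟩ with he
      obtain ⟨⟨e', i'⟩, hq⟩ := hψr (e, true)
      have hu : (splitConstruction G).Adj (Sum.inl u) (Sum.inr (e, true)) :=
        (adj_lr G u e true).mpr (by rw [he]; exact Sym2.mem_mk_left u v)
      have hv : (splitConstruction G).Adj (Sum.inl v) (Sum.inr (e, true)) :=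
        (adj_lr G v e true).mpr (by rw [he]; exact Sym2.mem_mk_right u v)
      have hu' : g u ∈ (e' : Sym2 V) := by
        have := ψ.map_adj_iff.mpr hu
        rw [hg, hq, adj_lr] at this
        exact this
      have hv' : g v ∈ (e' : Sym2 V) := by
        have := ψ.map_adj_iff.mpr hv
        rw [hg, hq, adj_lr] at this
        exact this
      have hne : g u ≠ g v := fun h' => h.ne (hginj h')
      have heq : (e' : Sym2 V) = s(g u, g v) := (Sym2.mem_and_mem_iff hne).mp ⟨hu', hv'⟩
      have he2 : s(g u, g v) ∈ G.edgeSet := by rw [← heq]; exact e'.2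
      exact G.mem_edgeSet.mp he2
    refine ⟨⟨⟨g, g, hginv, hginv⟩, ?_⟩, hginv, ?_⟩
    · intro u v
      constructor
      · intro h
        have h' : G.Adj (g u) (g v) := h
        have := key _ _ h'
        rwa [hginv, hginv] at this
      · exact key u v
    · intro u h
      exact hfpf (Sum.inl u) (by rw [hg]; exact congrArg Sum.inl h)
end

section
/- Let G = (V,E) be a connected finite simple graph with |V| ≥ 3, and let G' be the bipartite construction of G. Then G admits a fixed point free involution if and only if G' admits a fixed point free involution. -/
open Sum SimpleGraph

lemma bip_adj {V : Type} (G : SimpleGraph V) (x y : V ⊕ (G.edgeSet × Bool)) :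
    (bipartiteConstruction G).Adj x y ↔
      ∃ (u : V) (e : G.edgeSet) (i : Bool),
        (x = inl u ∧ y = inr (e, i) ∨ y = inl u ∧ x = inr (e, i)) ∧ u ∈ (e : Sym2 V) := by
  rw [bipartiteConstruction, SimpleGraph.fromRel_adj]
  constructor
  · rintro ⟨hne, h | h⟩
    · obtain ⟨u, e, i, hx, hy, hm⟩ := h; exact ⟨u, e, i, Or.inl ⟨hx, hy⟩, hm⟩
    · obtain ⟨u, e, i, hy, hx, hm⟩ := h; exact ⟨u, e, i, Or.inr ⟨hy, hx⟩, hm⟩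
  · rintro ⟨u, e, i, h | h, hm⟩
    · exact ⟨by simp [h.1, h.2], Or.inl ⟨u, e, i, h.1, h.2, hm⟩⟩
    · exact ⟨by simp [h.1, h.2], Or.inr ⟨u, e, i, h.1, h.2, hm⟩⟩

lemma bip_adj_inl_inr {V : Type} (G : SimpleGraph V) (u : V) (e : G.edgeSet) (i : Bool) :
    (bipartiteConstruction G).Adj (inl u) (inr (e, i)) ↔ u ∈ (e : Sym2 V) := by
  rw [bip_adj]
  constructor
  · rintro ⟨u', e', i', h, hm⟩
    rcases h with ⟨h1, h2⟩ | ⟨h1, h2⟩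
    · rw [inl.injEq] at h1
      rw [inr.injEq, Prod.mk.injEq] at h2
      rw [← h2.1, ← h1] at hm
      exact hm
    · exact absurd h1 (by simp)
  · intro hm; exact ⟨u, e, i, Or.inl ⟨rfl, rfl⟩, hm⟩

lemma bip_not_adj_inr_inr {V : Type} (G : SimpleGraph V) (p q : G.edgeSet × Bool) :
    ¬ (bipartiteConstruction G).Adj (inr p) (inr q) := by
  rw [bip_adj]
  rintro ⟨u, e, i, h, _⟩
  rcases h with ⟨h1, _⟩ | ⟨h1, _⟩ <;> exact absurd h1 (by simp)

lemma bip_not_adj_inl_inl {V : Type} (G : SimpleGraph V) (u v : V) :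
    ¬ (bipartiteConstruction G).Adj (inl u) (inl v) := by
  rw [bip_adj]
  rintro ⟨u', e, i, h, _⟩
  rcases h with ⟨_, h2⟩ | ⟨_, h2⟩ <;> exact absurd h2 (by simp)

lemma adj_iff_common {V : Type} (G : SimpleGraph V) (u v : V) :
    G.Adj u v ↔ u ≠ v ∧ ∃ z, (bipartiteConstruction G).Adj z (inl u) ∧
      (bipartiteConstruction G).Adj z (inl v) := by
  constructor
  · intro h
    refine ⟨G.ne_of_adj h, inr (⟨s(u, v), h⟩, false), ?_, ?_⟩
    · exact ((bipartiteConstruction G).adj_symm ((bip_adj_inl_inr G u _ false).2 (by simp)))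
    · exact ((bipartiteConstruction G).adj_symm ((bip_adj_inl_inr G v _ false).2 (by simp)))
  · rintro ⟨hne, z, h1, h2⟩
    cases z with
    | inl w => exact absurd ((bipartiteConstruction G).adj_symm h1) (bip_not_adj_inl_inl G u w)
    | inr p =>
      obtain ⟨e, i⟩ := p
      have hu : u ∈ (e : Sym2 V) :=
        (bip_adj_inl_inr G u e i).1 ((bipartiteConstruction G).adj_symm h1)
      have hv : v ∈ (e : Sym2 V) :=
        (bip_adj_inl_inr G v e i).1 ((bipartiteConstruction G).adj_symm h2)
      have : (e : Sym2 V) = s(u, v) := (Sym2.mem_and_mem_iff hne).1 ⟨hu, hv⟩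
      have he := e.2
      rw [this] at he
      exact he

/-- for a connected finite simple graph `G` with at least 3 vertices, `G`
admits a fixed point free involution iff its bipartite construction does. -/
theorem bipartite_fpfInv_iff {V : Type} [Fintype V] (G : SimpleGraph V)
    (hconn : G.Connected) (hV : 3 ≤ Fintype.card V) :
    HasFPFInv G ↔ HasFPFInv (bipartiteConstruction G) := by
  classical
  have hexadj : ∀ u : V, ∃ w, G.Adj u w := by
    intro u
    obtain ⟨v, hv⟩ := Fintype.exists_ne_of_one_lt_card (by omega) u
    obtain ⟨p⟩ := hconn.preconnected u v
    cases p with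
    | nil => exact absurd rfl hv
    | cons h q => exact ⟨_, h⟩
  constructor
  · rintro ⟨φ, h2, hfpf⟩
    have hinj : Function.Injective φ := φ.toEquiv.injective
    set E : G.edgeSet ≃ G.edgeSet := φ.mapEdgeSet with hE
    have hEval : ∀ e : G.edgeSet, (E e : Sym2 V) = Sym2.map φ (e : Sym2 V) := fun e => rfl
    have hEinv : ∀ e, E (E e) = e := by
      intro e
      apply Subtype.ext
      rw [hEval, hEval]
      induction (e : Sym2 V) with
      | _ a b => simp [h2]
    have hmem : ∀ (u : V) (e : G.edgeSet), u ∈ (e : Sym2 V) ↔ φ u ∈ (E e : Sym2 V) := by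
      intro u e
      rw [hEval, Sym2.mem_map]
      constructor
      · intro h; exact ⟨u, h, rfl⟩
      · rintro ⟨a, ha, hfa⟩; rwa [hinj hfa] at ha
    set σ : G.edgeSet × Bool → G.edgeSet × Bool :=
      fun p => (E p.1, if E p.1 = p.1 then !p.2 else p.2) with hσdef
    have hσσ : ∀ p, σ (σ p) = p := by
      rintro ⟨e, i⟩
      by_cases h : E e = e
      · simp [hσdef, h]
      · have h2' : E (E e) ≠ E e := fun hc => h (hc.symm.trans (hEinv e)).symm.symm
        have h3 : ¬ (e = E e) := fun hc => h hc.symm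
        simp [hσdef, h, h2', h3, hEinv e]
    set F : (V ⊕ (G.edgeSet × Bool)) → (V ⊕ (G.edgeSet × Bool)) := Sum.map φ σ with hFdef
    have hFF : ∀ x, F (F x) = x := by
      rintro (u | p) <;> simp [hFdef, h2, hσσ]
    have hkey : ∀ x y, (bipartiteConstruction G).Adj x y →
        (bipartiteConstruction G).Adj (F x) (F y) := by
      intro x y hxy
      rw [bip_adj] at hxy
      obtain ⟨u, e, i, h, hm⟩ := hxy
      have hadj : (bipartiteConstruction G).Adj (F (inl u)) (F (inr (e, i))) := by
        show (bipartiteConstruction G).Adj (inl (φ u)) (inr (σ (e, i)))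
        have hev : σ (e, i) = (E e, (σ (e, i)).2) := rfl
        rw [hev]
        exact (bip_adj_inl_inr G _ _ _).2 ((hmem u e).1 hm)
      rcases h with ⟨h1, h2⟩ | ⟨h1, h2⟩
      · rw [h1, h2]; exact hadj
      · rw [h1, h2]; exact (bipartiteConstruction G).adj_symm hadj
    have hiff : ∀ x y, (bipartiteConstruction G).Adj (F x) (F y) ↔
        (bipartiteConstruction G).Adj x y := by
      intro x y
      constructor
      · intro h
        have := hkey _ _ h
        rwa [hFF, hFF] at this
      · exact hkey x y
    have hFne : ∀ x, F x ≠ x := by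
      rintro (u | ⟨e, i⟩)
      · intro hc
        exact hfpf u (by injection hc)
      · intro hc
        have hc' : σ (e, i) = (e, i) := by injection hc
        by_cases h : E e = e
        · have hsnd : (σ (e, i)).2 = !i := by simp [hσdef, h]
          rw [hc'] at hsnd
          simp at hsnd
        · have hfst : (σ (e, i)).1 = E e := rfl
          rw [hc'] at hfst
          exact h hfst.symm
    exact ⟨⟨⟨F, F, hFF, hFF⟩, by intro a b; exact hiff a b⟩,
      fun x => hFF x, fun x => hFne x⟩
  · rintro ⟨ψ, h2, hfpf⟩
    -- twins
    have twin_map : ∀ x y : V ⊕ (G.edgeSet × Bool),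
        (y ≠ x ∧ ∀ z, (bipartiteConstruction G).Adj z x ↔ (bipartiteConstruction G).Adj z y) →
        (ψ y ≠ ψ x ∧ ∀ z, (bipartiteConstruction G).Adj z (ψ x) ↔
          (bipartiteConstruction G).Adj z (ψ y)) := by
      rintro x y ⟨hne, hall⟩
      refine ⟨fun hc => hne (ψ.toEquiv.injective hc), fun z => ?_⟩
      have hz : z = ψ (ψ z) := (h2 z).symm
      rw [hz, ψ.map_adj_iff, ψ.map_adj_iff]
      exact hall (ψ z)
    have twin_inr : ∀ (e : G.edgeSet) (i : Bool),
        (inr (e, !i) : V ⊕ (G.edgeSet × Bool)) ≠ inr (e, i) ∧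
        ∀ z, (bipartiteConstruction G).Adj z (inr (e, i)) ↔
          (bipartiteConstruction G).Adj z (inr (e, !i)) := by
      intro e i
      refine ⟨by simp, fun z => ?_⟩
      cases z with
      | inl u => rw [bip_adj_inl_inr, bip_adj_inl_inr]
      | inr p =>
        constructor <;> intro h <;> exact absurd h (bip_not_adj_inr_inr G _ _)
    have not_twin_inl : ∀ u : V, ¬ ∃ y, y ≠ inl u ∧
        ∀ z, (bipartiteConstruction G).Adj z (inl u) ↔ (bipartiteConstruction G).Adj z y := by
      rintro u ⟨y, hyne, hall⟩
      obtain ⟨w, hw⟩ := hexadj u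
      cases y with
      | inr p =>
        have hadj : (bipartiteConstruction G).Adj (inr (⟨s(u, w), hw⟩, false)) (inl u) :=
          (bipartiteConstruction G).adj_symm ((bip_adj_inl_inr G u _ false).2 (by simp))
        exact bip_not_adj_inr_inr G _ _ ((hall _).1 hadj)
      | inl u' =>
        have huu' : u' ≠ u := fun hc => hyne (by rw [hc])
        have hNu : ∀ w', G.Adj u w' → w' = u' := by
          intro w' hw'
          have hadj : (bipartiteConstruction G).Adj (inr (⟨s(u, w'), hw'⟩, false)) (inl u) :=
            (bipartiteConstruction G).adj_symm ((bip_adj_inl_inr G u _ false).2 (by simp))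
          have := (bip_adj_inl_inr G u' _ false).1
            ((bipartiteConstruction G).adj_symm ((hall _).1 hadj))
          simp only [Sym2.mem_iff] at this
          rcases this with h | h
          · exact absurd h huu'
          · exact h.symm
        have hNu' : ∀ w', G.Adj u' w' → w' = u := by
          intro w' hw'
          have hadj : (bipartiteConstruction G).Adj (inr (⟨s(u', w'), hw'⟩, false)) (inl u') :=
            (bipartiteConstruction G).adj_symm ((bip_adj_inl_inr G u' _ false).2 (by simp))
          have := (bip_adj_inl_inr G u _ false).1
            ((bipartiteConstruction G).adj_symm ((hall _).2 hadj))
          simp only [Sym2.mem_iff] at this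
          rcases this with h | h
          · exact absurd h.symm huu'
          · exact h.symm
        have aux : ∀ {a x : V} (p : G.Walk a x), (a = u ∨ a = u') → (x = u ∨ x = u') := by
          intro a x p
          induction p with
          | nil => exact id
          | cons hadj p ih =>
            rintro (rfl | rfl)
            · exact ih (Or.inr (hNu _ hadj))
            · exact ih (Or.inl (hNu' _ hadj))
        have ht : ∃ t : V, t ≠ u ∧ t ≠ u' := by
          by_contra hc
          push_neg at hc
          have hsub : (Finset.univ : Finset V) ⊆ {u, u'} := by
            intro t _
            simp only [Finset.mem_insert, Finset.mem_singleton]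
            by_cases h : t = u
            · exact Or.inl h
            · exact Or.inr (hc t h)
          have := Finset.card_le_card hsub
          rw [Finset.card_univ] at this
          have h2' : ({u, u'} : Finset V).card ≤ 2 :=
            le_trans (Finset.card_insert_le _ _) (by simp)
          omega
        obtain ⟨t, htu, htu'⟩ := ht
        obtain ⟨p⟩ := hconn.preconnected u t
        rcases aux p (Or.inl rfl) with h | h
        · exact htu h
        · exact htu' h
    have hψinl : ∀ u : V, ∃ v, ψ (inl u) = inl v := by
      intro u
      cases hx : ψ (inl u) with
      | inl v => exact ⟨v, rfl⟩
      | inr p =>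
        exfalso
        obtain ⟨e, i⟩ := p
        have htw := twin_map _ _ (twin_inr e i)
        have hback : ψ (inr (e, i)) = inl u := by rw [← hx, h2]
        rw [hback] at htw
        exact not_twin_inl u ⟨ψ (inr (e, !i)), htw.1, htw.2⟩
    choose f hf using hψinl
    have hff : ∀ u, f (f u) = u := by
      intro u
      have : (inl (f (f u)) : V ⊕ (G.edgeSet × Bool)) = inl u := by
        rw [← hf (f u), ← hf u, h2]
      injection this
    have hfadj : ∀ u v, G.Adj u v → G.Adj (f u) (f v) := by
      intro u v h
      rw [adj_iff_common] at h ⊢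
      obtain ⟨hne, z, hz1, hz2⟩ := h
      refine ⟨fun hc => hne (by rw [← hff u, hc, hff]), ψ z, ?_, ?_⟩
      · rw [← hf u, ψ.map_adj_iff]; exact hz1
      · rw [← hf v, ψ.map_adj_iff]; exact hz2
    have hiff : ∀ u v, G.Adj (f u) (f v) ↔ G.Adj u v := by
      intro u v
      constructor
      · intro h
        have := hfadj _ _ h
        rwa [hff, hff] at this
      · exact hfadj u v
    have hne : ∀ u, f u ≠ u := by
      intro u hc
      exact hfpf (inl u) (by rw [hf u, hc])
    exact ⟨⟨⟨f, f, hff, hff⟩, by intro a b; exact hiff a b⟩,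
      fun u => hff u, fun u => hne u⟩
end
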